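/- With the restricted ultrapower setup, if U is a complete and definable ultrafilter on P_𝔛, then Cod(N/M) ⊆ 𝔛, where N = ∏_𝔛 K / U: for every [f] ∈ N the set set_{N/M}([f]) = {a ∈ M : N ⊨ a ∈ [f]} belongs to 𝔛. -/

import Mathlib

namespace Paper

/-! ### Syntax of (second-order) arithmetic.

Terms of the language `L_A = {0, 1, +, ·, <}`, with number variables indexed by `ℕ`.
Formulas also allow atomic formulas `t ∈ X_k` (membership in a set variable) and
set quantifiers `allS`; first-order formulas are those avoiding both. -/

inductive PTerm where
  | var : ℕ → PTerm
  | zero : PTerm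
  | one : PTerm
  | add : PTerm → PTerm → PTerm
  | mul : PTerm → PTerm → PTerm

inductive Fml where
  | eq : PTerm → PTerm → Fml
  | lt : PTerm → PTerm → Fml
  | mem : PTerm → ℕ → Fml
  | not : Fml → Fml
  | imp : Fml → Fml → Fml
  | all : ℕ → Fml → Fml
  | allS : ℕ → Fml → Fml

def Fml.and (φ ψ : Fml) : Fml := .not (.imp φ (.not ψ))
def Fml.or (φ ψ : Fml) : Fml := .imp (.not φ) ψ
def Fml.iff (φ ψ : Fml) : Fml := (Fml.imp φ ψ).and (Fml.imp ψ φ)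
def Fml.ex (x : ℕ) (φ : Fml) : Fml := .not (.all x (.not φ))
def Fml.exS (k : ℕ) (φ : Fml) : Fml := .not (.allS k (.not φ))

/-- A structure for the language `{0, 1, +, ·, <}` on a carrier `M`
(bundled, so that several structures can live on the same carrier). -/
structure AStr (M : Type) where
  zero : M
  one : M
  add : M → M → M
  mul : M → M → M
  lt : M → M → Prop

/-- The standard model of arithmetic. -/
def natStr : AStr ℕ := ⟨0, 1, (· + ·), (· * ·), (· < ·)⟩

namespace PTerm

def vars : PTerm → Finset ℕ
  | var n => {n}
  | zero => ∅
  | one => ∅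
  | add t u => t.vars ∪ u.vars
  | mul t u => t.vars ∪ u.vars

/-- Substitution of a term `r` for the variable `x` (used only with `r` closed or
with `vars r ⊆ {x}`, in which case it is capture-free). -/
def subst (x : ℕ) (r : PTerm) : PTerm → PTerm
  | var n => if n = x then r else var n
  | zero => zero
  | one => one
  | add t u => add (subst x r t) (subst x r u)
  | mul t u => mul (subst x r t) (subst x r u)

def val {M : Type} (S : AStr M) (v : ℕ → M) : PTerm → M
  | var n => v n
  | zero => S.zero
  | one => S.one
  | add t u => S.add (t.val S v) (u.val S v)
  | mul t u => S.mul (t.val S v) (u.val S v)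

end PTerm

namespace Fml

/-- Free number variables. -/
def freeN : Fml → Finset ℕ
  | eq t u => t.vars ∪ u.vars
  | lt t u => t.vars ∪ u.vars
  | mem t _ => t.vars
  | not φ => φ.freeN
  | imp φ ψ => φ.freeN ∪ ψ.freeN
  | all x φ => φ.freeN.erase x
  | allS _ φ => φ.freeN

/-- Substitution of a term `r` for the (free) variable `x`. -/
def substN (x : ℕ) (r : PTerm) : Fml → Fml
  | eq t u => eq (PTerm.subst x r t) (PTerm.subst x r u)
  | lt t u => lt (PTerm.subst x r t) (PTerm.subst x r u)
  | mem t k => mem (PTerm.subst x r t) k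
  | not φ => not (substN x r φ)
  | imp φ ψ => imp (substN x r φ) (substN x r ψ)
  | all y φ => if y = x then all y φ else all y (substN x r φ)
  | allS k φ => allS k (substN x r φ)

/-- First-order formulas: no set variables, no set quantifiers. -/
def IsFO : Fml → Prop
  | eq _ _ => True
  | lt _ _ => True
  | mem _ _ => False
  | not φ => φ.IsFO
  | imp φ ψ => φ.IsFO ∧ ψ.IsFO
  | all _ φ => φ.IsFO
  | allS _ _ => False

/-- Arithmetical formulas: set variables allowed as parameters, but no set quantifiers. -/
def IsArith : Fml → Prop
  | eq _ _ => True
  | lt _ _ => True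
  | mem _ _ => True
  | not φ => φ.IsArith
  | imp φ ψ => φ.IsArith ∧ ψ.IsArith
  | all _ φ => φ.IsArith
  | allS _ _ => False

end Fml

/-! ### Satisfaction -/

/-- Satisfaction for a second-order structure `(M, 𝔛)`: number quantifiers range over `M`,
set quantifiers range over `𝔛`. -/
def Sat {M : Type} (S : AStr M) (𝔛 : Set (Set M)) : (ℕ → M) → (ℕ → Set M) → Fml → Prop
  | v, _, .eq t u => t.val S v = u.val S v
  | v, _, .lt t u => S.lt (t.val S v) (u.val S v)
  | v, w, .mem t k => t.val S v ∈ w k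
  | v, w, .not φ => ¬ Sat S 𝔛 v w φ
  | v, w, .imp φ ψ => Sat S 𝔛 v w φ → Sat S 𝔛 v w ψ
  | v, w, .all x φ => ∀ a : M, Sat S 𝔛 (Function.update v x a) w φ
  | v, w, .allS k φ => ∀ X ∈ 𝔛, Sat S 𝔛 v (Function.update w k X) φ

/-- First-order satisfaction. -/
def SatFO {M : Type} (S : AStr M) (v : ℕ → M) (φ : Fml) : Prop :=
  Sat S Set.univ v (fun _ => ∅) φ

/-- `M ⊨ T` for a first-order theory `T`. -/
def ModelsT {M : Type} (S : AStr M) (T : Set Fml) : Prop :=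
  ∀ φ ∈ T, ∀ v, SatFO S v φ

/-- Semantic consequence (equivalently, by the completeness theorem, provability). -/
def Proves (T : Set Fml) (φ : Fml) : Prop :=
  ∀ (M : Type) (S : AStr M), ModelsT S T → ∀ v, SatFO S v φ

/-- Consistency (equivalently, by the completeness theorem, having a model). -/
def ConsistentT (T : Set Fml) : Prop :=
  ∃ (M : Type) (S : AStr M), ModelsT S T

def IsFOSentence (φ : Fml) : Prop := φ.IsFO ∧ φ.freeN = ∅

/-- Completeness of a theory. -/
def CompleteT (T : Set Fml) : Prop :=
  ∀ φ, IsFOSentence φ → (Proves T φ ∨ Proves T φ.not)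

/-! ### Peano arithmetic -/

def numeral : ℕ → PTerm
  | 0 => .zero
  | n + 1 => .add (numeral n) .one

def univClosure (φ : Fml) : Fml := (φ.freeN.sort (· ≤ ·)).foldr Fml.all φ

/-- The induction axiom for `φ` in the variable `x` (before taking universal closure). -/
def indFml (φ : Fml) (x : ℕ) : Fml :=
  .imp ((φ.substN x .zero).and (.all x (.imp φ (φ.substN x (.add (.var x) .one)))))
    (.all x φ)

/-- The axioms of first-order Peano arithmetic `PA`. -/
def PAax : Set Fml :=
  {Fml.all 0 (.not (.eq (.add (.var 0) .one) .zero)),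
   Fml.all 0 (.all 1 (.imp (.eq (.add (.var 0) .one) (.add (.var 1) .one))
     (.eq (.var 0) (.var 1)))),
   Fml.all 0 (.eq (.add (.var 0) .zero) (.var 0)),
   Fml.all 0 (.all 1 (.eq (.add (.var 0) (.add (.var 1) .one))
     (.add (.add (.var 0) (.var 1)) .one))),
   Fml.all 0 (.eq (.mul (.var 0) .zero) .zero),
   Fml.all 0 (.all 1 (.eq (.mul (.var 0) (.add (.var 1) .one))
     (.add (.mul (.var 0) (.var 1)) (.var 0)))),
   Fml.all 0 (.all 1 (Fml.iff (.lt (.var 0) (.var 1))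
     (Fml.ex 2 (.eq (.add (.var 0) (.add (.var 2) .one)) (.var 1)))))} ∪
  {ψ | ∃ φ x, Fml.IsFO φ ∧ ψ = univClosure (indFml φ x)}

/-! ### Gödel coding -/

/-- The Cantor pairing function (the canonical pairing `⟨·,·⟩`). -/
def cpair (a b : ℕ) : ℕ := (a + b) * (a + b + 1) / 2 + a

def PTerm.code : PTerm → ℕ
  | .var n => cpair 0 n
  | .zero => cpair 1 0
  | .one => cpair 2 0
  | .add t u => cpair 3 (cpair t.code u.code)
  | .mul t u => cpair 4 (cpair t.code u.code)

def Fml.code : Fml → ℕ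
  | .eq t u => cpair 5 (cpair t.code u.code)
  | .lt t u => cpair 6 (cpair t.code u.code)
  | .not φ => cpair 7 φ.code
  | .imp φ ψ => cpair 8 (cpair φ.code ψ.code)
  | .all x φ => cpair 9 (cpair x φ.code)
  | .mem t k => cpair 10 (cpair t.code k)
  | .allS k φ => cpair 11 (cpair k φ.code)

/-- A theory identified with its set of Gödel codes. -/
def theoryCode (T : Set Fml) : Set ℕ := Fml.code '' T

/-! ### The arithmetical hierarchy (syntactic classes) -/

inductive IsDelta0 : Fml → Prop
  | eq (t u) : IsDelta0 (.eq t u)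
  | lt (t u) : IsDelta0 (.lt t u)
  | mem (t k) : IsDelta0 (.mem t k)
  | not {φ} : IsDelta0 φ → IsDelta0 φ.not
  | imp {φ ψ} : IsDelta0 φ → IsDelta0 ψ → IsDelta0 (φ.imp ψ)
  | ball {φ} (x t) : x ∉ PTerm.vars t → IsDelta0 φ →
      IsDelta0 (.all x (.imp (.lt (.var x) t) φ))

def IsSigma01 (φ : Fml) : Prop := ∃ x ψ, IsDelta0 ψ ∧ φ = Fml.ex x ψ

def IsPi01 (φ : Fml) : Prop := ∃ x ψ, IsDelta0 ψ ∧ φ = Fml.all x ψ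

/-! ### Subsystems of second-order arithmetic, semantically -/

/-- The basic axioms (`PA⁻`, a discretely ordered commutative semiring). -/
def PAminusSem {M : Type} (S : AStr M) : Prop :=
  (∀ a b c : M, S.add a (S.add b c) = S.add (S.add a b) c) ∧
  (∀ a b : M, S.add a b = S.add b a) ∧
  (∀ a b c : M, S.mul a (S.mul b c) = S.mul (S.mul a b) c) ∧
  (∀ a b : M, S.mul a b = S.mul b a) ∧
  (∀ a b c : M, S.mul a (S.add b c) = S.add (S.mul a b) (S.mul a c)) ∧
  (∀ a : M, S.add a S.zero = a) ∧
  (∀ a : M, S.mul a S.zero = S.zero) ∧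
  (∀ a : M, S.mul a S.one = a) ∧
  (∀ a b c : M, S.lt a b → S.lt b c → S.lt a c) ∧
  (∀ a : M, ¬ S.lt a a) ∧
  (∀ a b : M, S.lt a b ∨ a = b ∨ S.lt b a) ∧
  (∀ a b c : M, S.lt a b → S.lt (S.add a c) (S.add b c)) ∧
  (∀ a b c : M, S.lt S.zero c → S.lt a b → S.lt (S.mul a c) (S.mul b c)) ∧
  (∀ a b : M, S.lt a b → ∃ c : M, S.add a c = b) ∧
  S.lt S.zero S.one ∧
  (∀ a : M, S.lt S.zero a → a = S.one ∨ S.lt S.one a) ∧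
  (∀ a : M, a = S.zero ∨ S.lt S.zero a)

/-- `(M,𝔛)` satisfies the induction axiom for `φ` in the variable `x`
(with arbitrary number and set parameters). -/
def SatInd {M : Type} (S : AStr M) (𝔛 : Set (Set M)) (φ : Fml) (x : ℕ) : Prop :=
  ∀ (v : ℕ → M) (w : ℕ → Set M), (∀ k, w k ∈ 𝔛) →
    (Sat S 𝔛 (Function.update v x S.zero) w φ ∧
      ∀ a, Sat S 𝔛 (Function.update v x a) w φ →
        Sat S 𝔛 (Function.update v x (S.add a S.one)) w φ) →
    ∀ a, Sat S 𝔛 (Function.update v x a) w φ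

/-- `(M,𝔛) ⊨ RCA₀`: basic axioms, `Σ⁰₁` induction and `Δ⁰₁` comprehension. -/
def SatRCA0 {M : Type} (S : AStr M) (𝔛 : Set (Set M)) : Prop :=
  PAminusSem S ∧
  (∀ φ x, IsSigma01 φ → SatInd S 𝔛 φ x) ∧
  (∀ φ ψ x, IsSigma01 φ → IsPi01 ψ →
    ∀ (v : ℕ → M) (w : ℕ → Set M), (∀ k, w k ∈ 𝔛) →
      (∀ a, Sat S 𝔛 (Function.update v x a) w φ ↔ Sat S 𝔛 (Function.update v x a) w ψ) →
      {a : M | Sat S 𝔛 (Function.update v x a) w φ} ∈ 𝔛)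

/-- `(M,𝔛) ⊨ ACA₀`: basic axioms, the induction axiom and arithmetical comprehension. -/
def SatACA0 {M : Type} (S : AStr M) (𝔛 : Set (Set M)) : Prop :=
  PAminusSem S ∧
  (∀ X ∈ 𝔛, S.zero ∈ X → (∀ a, a ∈ X → S.add a S.one ∈ X) → ∀ a, a ∈ X) ∧
  (∀ φ x, Fml.IsArith φ → ∀ (v : ℕ → M) (w : ℕ → Set M), (∀ k, w k ∈ 𝔛) →
    {a : M | Sat S 𝔛 (Function.update v x a) w φ} ∈ 𝔛)

/-! ### Arithmetization inside a model

All notions below unfold the standard (`Δ₀`/`Σ₁`) arithmetized definitions at the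
meta-level, using the operations of a structure `S : AStr M`.  On models of `IΣ₁`
they agree with satisfaction of the corresponding arithmetic formulas. -/

namespace AStr

variable {M : Type} (S : AStr M)

/-- Interpretation of numerals. -/
def num : ℕ → M
  | 0 => S.zero
  | n + 1 => S.add (num n) S.one

def le (a b : M) : Prop := S.lt a b ∨ a = b

def two : M := S.add S.one S.one

/-- `p = ⟨a,b⟩` for the Cantor pairing function: `2p = (a+b)(a+b+1) + 2a`. -/
def PairRel (p a b : M) : Prop :=
  S.mul S.two p = S.add (S.mul (S.add a b) (S.add (S.add a b) S.one)) (S.mul S.two a)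

/-- `r = a mod m`. -/
def ModRel (a m r : M) : Prop := S.lt r m ∧ ∃ q, a = S.add (S.mul q m) r

/-- Gödel's β-function: `x = β(c, i)` where `c = ⟨a,b⟩` and `x = a mod (1 + (i+1)b)`. -/
def BetaRel (c i x : M) : Prop :=
  ∃ a b, S.PairRel c a b ∧ S.ModRel a (S.add S.one (S.mul (S.add i S.one) b)) x

/-- `s` codes a sequence of length `l` (as `s = ⟨c, l⟩`). -/
def SeqLen (s l : M) : Prop := ∃ c, S.PairRel s c l

/-- The `i`-th entry of the sequence coded by `s` is `x`. -/
def SeqAt (s i x : M) : Prop := ∃ c l, S.PairRel s c l ∧ S.lt i l ∧ S.BetaRel c i x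

/-- The fixed `Δ₀` coding formula `x ∈ y` for (bounded) sets:
`y = ⟨a,b⟩` and `a mod (1 + (x+1)b) = 1` with modulus `> 1`, and `x < y`. -/
def MemRel (x y : M) : Prop :=
  S.lt x y ∧ ∃ a b, S.PairRel y a b ∧
    S.lt S.one (S.add S.one (S.mul (S.add x S.one) b)) ∧
    S.ModRel a (S.add S.one (S.mul (S.add x S.one) b)) S.one

/-- Tagged pairs, used for codes of syntax: `x = ⟨tag, payload⟩`. -/
def Node (x tag payload : M) : Prop := S.PairRel x tag payload

/-- `x` is the code of the variable `v`. -/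
def VarC (v x : M) : Prop := S.Node x (S.num 0) v

def AddC (t u y : M) : Prop := ∃ p, S.PairRel p t u ∧ S.Node y (S.num 3) p
def MulC (t u y : M) : Prop := ∃ p, S.PairRel p t u ∧ S.Node y (S.num 4) p
def EqC (t u y : M) : Prop := ∃ p, S.PairRel p t u ∧ S.Node y (S.num 5) p
def LtC (t u y : M) : Prop := ∃ p, S.PairRel p t u ∧ S.Node y (S.num 6) p
def NotC (x y : M) : Prop := S.Node y (S.num 7) x
def ImpC (x y z : M) : Prop := ∃ p, S.PairRel p x y ∧ S.Node z (S.num 8) p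
def AllC (v x y : M) : Prop := ∃ p, S.PairRel p v x ∧ S.Node y (S.num 9) p

/-- `s` codes a construction sequence for terms. -/
def IsTermConSeq (s : M) : Prop :=
  ∀ i x, S.SeqAt s i x →
    (∃ v, S.VarC v x) ∨ S.Node x (S.num 1) (S.num 0) ∨ S.Node x (S.num 2) (S.num 0) ∨
    (∃ j k y z, S.lt j i ∧ S.lt k i ∧ S.SeqAt s j y ∧ S.SeqAt s k z ∧
      (S.AddC y z x ∨ S.MulC y z x))

/-- `x` is a term code (in the sense of `M`, possibly nonstandard). -/
def TermCodeM (x : M) : Prop := ∃ s i, S.IsTermConSeq s ∧ S.SeqAt s i x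

/-- `s` codes a construction sequence for (first-order) formulas. -/
def IsFmlConSeq (s : M) : Prop :=
  ∀ i x, S.SeqAt s i x →
    (∃ t u, S.TermCodeM t ∧ S.TermCodeM u ∧ (S.EqC t u x ∨ S.LtC t u x)) ∨
    (∃ j y, S.lt j i ∧ S.SeqAt s j y ∧ S.NotC y x) ∨
    (∃ j k y z, S.lt j i ∧ S.lt k i ∧ S.SeqAt s j y ∧ S.SeqAt s k z ∧ S.ImpC y z x) ∨
    (∃ j v y, S.lt j i ∧ S.SeqAt s j y ∧ S.AllC v y x)

/-- `x` is a formula code (in the sense of `M`, possibly nonstandard). -/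
def FmlCodeM (x : M) : Prop := ∃ s i, S.IsFmlConSeq s ∧ S.SeqAt s i x

/-- Construction sequences of pairs (term code, occurrence flag for the variable `v`). -/
def IsOccConSeq (v s : M) : Prop :=
  ∀ i p, S.SeqAt s i p → ∃ x f, S.PairRel p x f ∧
    ((S.VarC v x ∧ f = S.num 1) ∨
     (∃ u, S.VarC u x ∧ u ≠ v ∧ f = S.num 0) ∨
     ((S.Node x (S.num 1) (S.num 0) ∨ S.Node x (S.num 2) (S.num 0)) ∧ f = S.num 0) ∨
     (∃ j k y z g h pj pk, S.lt j i ∧ S.lt k i ∧ S.SeqAt s j pj ∧ S.SeqAt s k pk ∧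
       S.PairRel pj y g ∧ S.PairRel pk z h ∧ (S.AddC y z x ∨ S.MulC y z x) ∧
       ((f = S.num 1 ∧ (g = S.num 1 ∨ h = S.num 1)) ∨
        (f = S.num 0 ∧ g = S.num 0 ∧ h = S.num 0))))

/-- `f = 1` iff the variable `v` occurs in the term coded by `t` (`f ∈ {0,1}`). -/
def OccT (v t f : M) : Prop :=
  ∃ s i p, S.IsOccConSeq v s ∧ S.SeqAt s i p ∧ S.PairRel p t f

/-- Construction sequences of pairs (formula code, freeness flag for the variable `v`). -/
def IsFreeConSeq (v s : M) : Prop :=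
  ∀ i p, S.SeqAt s i p → ∃ x f, S.PairRel p x f ∧
    ((∃ t u, (S.EqC t u x ∨ S.LtC t u x) ∧
       ((f = S.num 1 ∧ (S.OccT v t (S.num 1) ∨ S.OccT v u (S.num 1))) ∨
        (f = S.num 0 ∧ S.OccT v t (S.num 0) ∧ S.OccT v u (S.num 0)))) ∨
     (∃ j y g pj, S.lt j i ∧ S.SeqAt s j pj ∧ S.PairRel pj y g ∧ S.NotC y x ∧ f = g) ∨
     (∃ j k y z g h pj pk, S.lt j i ∧ S.lt k i ∧ S.SeqAt s j pj ∧ S.SeqAt s k pk ∧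
       S.PairRel pj y g ∧ S.PairRel pk z h ∧ S.ImpC y z x ∧
       ((f = S.num 1 ∧ (g = S.num 1 ∨ h = S.num 1)) ∨
        (f = S.num 0 ∧ g = S.num 0 ∧ h = S.num 0))) ∨
     (∃ j w y g pj, S.lt j i ∧ S.SeqAt s j pj ∧ S.PairRel pj y g ∧ S.AllC w y x ∧
       ((w = v ∧ f = S.num 0) ∨ (w ≠ v ∧ f = g))))

/-- `f = 1` iff the variable `v` is free in the formula coded by `φ`. -/
def FreeF (v φ f : M) : Prop :=
  ∃ s i p, S.IsFreeConSeq v s ∧ S.SeqAt s i p ∧ S.PairRel p φ f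

/-- Construction sequences of pairs (term code, result of substituting `t` for `v`). -/
def IsSubTConSeq (v t s : M) : Prop :=
  ∀ i p, S.SeqAt s i p → ∃ x x', S.PairRel p x x' ∧
    ((S.VarC v x ∧ x' = t) ∨
     (∃ u, S.VarC u x ∧ u ≠ v ∧ x' = x) ∨
     ((S.Node x (S.num 1) (S.num 0) ∨ S.Node x (S.num 2) (S.num 0)) ∧ x' = x) ∨
     (∃ j k y z y' z' pj pk, S.lt j i ∧ S.lt k i ∧ S.SeqAt s j pj ∧ S.SeqAt s k pk ∧
       S.PairRel pj y y' ∧ S.PairRel pk z z' ∧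
       ((S.AddC y z x ∧ S.AddC y' z' x') ∨ (S.MulC y z x ∧ S.MulC y' z' x'))))

/-- Substitution of the term (code) `t` for the variable `v` in terms: `x' = x[t/v]`. -/
def SubT (v t x x' : M) : Prop :=
  ∃ s i p, S.IsSubTConSeq v t s ∧ S.SeqAt s i p ∧ S.PairRel p x x'

/-- Construction sequences for capture-free substitution in formulas. -/
def IsSubFConSeq (v t s : M) : Prop :=
  ∀ i p, S.SeqAt s i p → ∃ x x', S.PairRel p x x' ∧
    ((∃ a b a' b', S.SubT v t a a' ∧ S.SubT v t b b' ∧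
       ((S.EqC a b x ∧ S.EqC a' b' x') ∨ (S.LtC a b x ∧ S.LtC a' b' x'))) ∨
     (∃ j y y' pj, S.lt j i ∧ S.SeqAt s j pj ∧ S.PairRel pj y y' ∧
       S.NotC y x ∧ S.NotC y' x') ∨
     (∃ j k y z y' z' pj pk, S.lt j i ∧ S.lt k i ∧ S.SeqAt s j pj ∧ S.SeqAt s k pk ∧
       S.PairRel pj y y' ∧ S.PairRel pk z z' ∧ S.ImpC y z x ∧ S.ImpC y' z' x') ∨
     (∃ w y, S.AllC w y x ∧
       ((w = v ∧ x' = x) ∨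
        (w ≠ v ∧ (S.OccT w t (S.num 0) ∨ S.FreeF v y (S.num 0)) ∧
          ∃ j y' pj, S.lt j i ∧ S.SeqAt s j pj ∧ S.PairRel pj y y' ∧ S.AllC w y' x'))))

/-- Capture-free substitution in formulas: `x' = x[t/v]`, with `t` substitutable for `v`. -/
def SubF (v t x x' : M) : Prop :=
  ∃ s i p, S.IsSubFConSeq v t s ∧ S.SeqAt s i p ∧ S.PairRel p x x'

/-- `x` is (the code of) a generalization `∀v₁ ⋯ ∀vₖ y` of `y`. -/
def GenOf (y x : M) : Prop :=
  ∃ s i, S.SeqAt s (S.num 0) y ∧ S.SeqAt s i x ∧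
    ∀ j z z', S.SeqAt s j z → S.SeqAt s (S.add j S.one) z' → S.le (S.add j S.one) i →
      ∃ v, S.AllC v z z'

/-- Codes of instances of the logical axiom schemes (a Hilbert-style calculus with
modus ponens as the only rule; axioms are taken together with their generalizations). -/
def LogAxCore (x : M) : Prop :=
  -- A1 : a → (b → a)
  (∃ a b y, S.FmlCodeM a ∧ S.FmlCodeM b ∧ S.ImpC b a y ∧ S.ImpC a y x) ∨
  -- A2 : (a → (b → c)) → ((a → b) → (a → c))
  (∃ a b c bc abc ab ac r, S.FmlCodeM a ∧ S.FmlCodeM b ∧ S.FmlCodeM c ∧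
    S.ImpC b c bc ∧ S.ImpC a bc abc ∧ S.ImpC a b ab ∧ S.ImpC a c ac ∧
    S.ImpC ab ac r ∧ S.ImpC abc r x) ∨
  -- A3 : (¬b → ¬a) → (a → b)
  (∃ a b na nb l r, S.FmlCodeM a ∧ S.FmlCodeM b ∧ S.NotC a na ∧ S.NotC b nb ∧
    S.ImpC nb na l ∧ S.ImpC a b r ∧ S.ImpC l r x) ∨
  -- A4 : ∀v a → a[t/v]
  (∃ v t a a' al, S.TermCodeM t ∧ S.FmlCodeM a ∧ S.AllC v a al ∧ S.SubF v t a a' ∧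
    S.ImpC al a' x) ∨
  -- A5 : ∀v (a → b) → (∀v a → ∀v b)
  (∃ v a b ab alab ala alb r, S.FmlCodeM a ∧ S.FmlCodeM b ∧ S.ImpC a b ab ∧
    S.AllC v ab alab ∧ S.AllC v a ala ∧ S.AllC v b alb ∧ S.ImpC ala alb r ∧
    S.ImpC alab r x) ∨
  -- A6 : a → ∀v a, for v not free in a
  (∃ v a ala, S.FmlCodeM a ∧ S.FreeF v a (S.num 0) ∧ S.AllC v a ala ∧ S.ImpC a ala x) ∨
  -- E1 : t = t
  (∃ t, S.TermCodeM t ∧ S.EqC t t x) ∨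
  -- E2 : u = w → w = u (variables)
  (∃ u w vu vw e1 e2, S.VarC u vu ∧ S.VarC w vw ∧ S.EqC vu vw e1 ∧ S.EqC vw vu e2 ∧
    S.ImpC e1 e2 x) ∨
  -- E3 : u = w → (w = z → u = z) (variables)
  (∃ u w z vu vw vz e1 e2 e3 r, S.VarC u vu ∧ S.VarC w vw ∧ S.VarC z vz ∧
    S.EqC vu vw e1 ∧ S.EqC vw vz e2 ∧ S.EqC vu vz e3 ∧ S.ImpC e2 e3 r ∧ S.ImpC e1 r x) ∨
  -- E4 : congruence of +, ·, < with respect to = (variables)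
  (∃ u1 w1 u2 w2 a1 b1 a2 b2 e1 e2 s1 s2 es r,
    S.VarC u1 a1 ∧ S.VarC w1 b1 ∧ S.VarC u2 a2 ∧ S.VarC w2 b2 ∧
    S.EqC a1 b1 e1 ∧ S.EqC a2 b2 e2 ∧
    ((S.AddC a1 a2 s1 ∧ S.AddC b1 b2 s2 ∧ S.EqC s1 s2 es) ∨
     (S.MulC a1 a2 s1 ∧ S.MulC b1 b2 s2 ∧ S.EqC s1 s2 es) ∨
     (S.LtC a1 a2 s1 ∧ S.LtC b1 b2 s2 ∧ S.ImpC s1 s2 es)) ∧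
    S.ImpC e2 es r ∧ S.ImpC e1 r x) ∨
  -- E5 : congruence of = (variables)
  (∃ u1 w1 u2 w2 a1 b1 a2 b2 e1 e2 d1 d2 inner r,
    S.VarC u1 a1 ∧ S.VarC w1 b1 ∧ S.VarC u2 a2 ∧ S.VarC w2 b2 ∧
    S.EqC a1 b1 e1 ∧ S.EqC a2 b2 e2 ∧ S.EqC a1 a2 d1 ∧ S.EqC b1 b2 d2 ∧
    S.ImpC d1 d2 inner ∧ S.ImpC e2 inner r ∧ S.ImpC e1 r x)

/-- Logical axioms: generalizations of instances of the axiom schemes. -/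
def LogAx (x : M) : Prop := ∃ y, S.LogAxCore y ∧ S.GenOf y x

/-- `s` codes a proof of `φ` from the set `Γ ⊆ M` of (codes of) sentences:
every entry is a logical axiom, a member of `Γ`, or follows by modus ponens. -/
def ProofFrom (Γ : Set M) (s φ : M) : Prop :=
  (∃ i, S.SeqAt s i φ) ∧
  ∀ i x, S.SeqAt s i x →
    S.LogAx x ∨ x ∈ Γ ∨
    (∃ j k y z, S.lt j i ∧ S.lt k i ∧ S.SeqAt s j y ∧ S.SeqAt s k z ∧ S.ImpC y x z)

/-- Provability (in the sense of `M`) from the axiom set `Γ ⊆ M`. -/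
def ProvFrom (Γ : Set M) (φ : M) : Prop := ∃ s, S.ProofFrom Γ s φ

/-- `M ⊨ Con_Γ` : there is no (possibly nonstandard) proof of a contradiction from `Γ`. -/
def ConOf (Γ : Set M) : Prop :=
  ¬ ∃ φ nφ, S.NotC φ nφ ∧ S.ProvFrom Γ φ ∧ S.ProvFrom Γ nφ

/-- `M ⊨ Con_T` for a (standard) theory `T`: `M` thinks every finite subtheory
of `T` is consistent. -/
def SatConTheory (T : Set Fml) : Prop :=
  ∀ F : Finset Fml, ↑F ⊆ T → S.ConOf {x : M | ∃ φ ∈ F, x = S.num (Fml.code φ)}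

/-! ### Coded sets, standard systems, filters on `P_𝔛` -/

/-- `A` is unbounded in `M`. -/
def Unb (A : Set M) : Prop := ∀ b, ∃ a ∈ A, S.lt b a

/-- `P_𝔛`: the collection of unbounded sets in `𝔛` (a partial order under `⊆`). -/
def PX (𝔛 : Set (Set M)) : Set (Set M) := {A | A ∈ 𝔛 ∧ S.Unb A}

/-- The `a`-th slice `(A)_a = {b | ⟨a,b⟩ ∈ A}`. -/
def SliceAt (A : Set M) (a : M) : Set M := {b | ∃ p, S.PairRel p a b ∧ p ∈ A}

/-- A function `M → M` is coded in `𝔛` if its graph (via the canonical pairing)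
belongs to `𝔛`. -/
def CodedFun (𝔛 : Set (Set M)) (f : M → M) : Prop :=
  ∃ G ∈ 𝔛, ∀ a b, f a = b ↔ b ∈ S.SliceAt G a

/-- A family `F` of sets is definable (over `(M,𝔛)`) if `{a | (A)_a ∈ F} ∈ 𝔛`
for every `A ∈ 𝔛`. -/
def DefinableFam (𝔛 F : Set (Set M)) : Prop :=
  ∀ A ∈ 𝔛, {a : M | S.SliceAt A a ∈ F} ∈ 𝔛

/-- `F` is a complete family: every function coded in `𝔛` with bounded range is
constant on some member of `F`. -/
def CompleteOn (𝔛 F : Set (Set M)) : Prop :=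
  ∀ f : M → M, S.CodedFun 𝔛 f → (∃ b, ∀ a, S.lt (f a) b) →
    ∃ A ∈ F, ∀ x ∈ A, ∀ y ∈ A, f x = f y

/-- The standard system `SSy(M)`: standard parts of the `M`-coded sets. -/
def SSy : Set (Set ℕ) := {A | ∃ c : M, ∀ n : ℕ, (n ∈ A ↔ S.MemRel (S.num n) c)}

/-- `M` is nonstandard. -/
def Nonstd : Prop := ∃ a : M, ∀ n : ℕ, a ≠ S.num n

/-- `M` is recursively saturated: every recursive type (in the variable `0`, with
finitely many parameters assigned to the variables `1, …, k`) that is finitely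
realized in `M` is realized in `M`. -/
def RecSat : Prop :=
  ∀ (p : Set Fml) (k : ℕ) (par : ℕ → M),
    (∀ φ ∈ p, Fml.IsFO φ ∧ φ.freeN ⊆ Finset.range (k + 1)) →
    ComputablePred (fun n => ∃ φ ∈ p, Fml.code φ = n) →
    (∀ F : Finset Fml, ↑F ⊆ p →
      ∃ a : M, ∀ φ ∈ F, SatFO S (fun i => if i = 0 then a else par i) φ) →
    ∃ a : M, ∀ φ ∈ p, SatFO S (fun i => if i = 0 then a else par i) φ

/-- `c` is the least code of the (bounded) set `A`. -/
def IsLeastCode (A : Set M) (c : M) : Prop :=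
  (∀ x, S.MemRel x c ↔ x ∈ A) ∧ ∀ c', (∀ x, S.MemRel x c' ↔ x ∈ A) → S.le c c'

/-- `A* = {⟨A ∩ I_{<a}⟩ | a ∈ M}`, the set of least codes of initial segments of `A`. -/
def star (A : Set M) : Set M :=
  {c | ∃ a, S.IsLeastCode (A ∩ {b | S.lt b a}) c}

end AStr

/-! ### Filters and partial orders of sets -/

/-- A filter on a partial order `P` of sets, ordered by inclusion: a proper, nonempty,
upward closed, downward directed subset of `P`. -/
def IsFilterOn {α : Type} (P F : Set (Set α)) : Prop :=
  F ⊆ P ∧ F.Nonempty ∧ F ≠ P ∧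
  (∀ A ∈ F, ∀ B ∈ P, A ⊆ B → B ∈ F) ∧
  (∀ A ∈ F, ∀ B ∈ F, ∃ C ∈ F, C ⊆ A ∧ C ⊆ B)

/-- An ultrafilter on a partial order of sets: a maximal filter. -/
def IsUltraOn {α : Type} (P U : Set (Set α)) : Prop :=
  IsFilterOn P U ∧ ∀ F, IsFilterOn P F → U ⊆ F → F = U

/-- A principal filter on a partial order of sets. -/
def IsPrincipalOn {α : Type} (P U : Set (Set α)) : Prop :=
  ∃ A ∈ P, U = {B | B ∈ P ∧ A ⊆ B}

/-- The countable chain condition for a partial order `P` of sets (ordered by `⊆`):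
every uncountable subset contains two distinct compatible elements. -/
def CCCOn {α : Type} (P : Set (Set α)) : Prop :=
  ∀ A : Set (Set α), A ⊆ P → ¬A.Countable →
    ∃ X ∈ A, ∃ Y ∈ A, X ≠ Y ∧ ∃ Z ∈ P, Z ⊆ X ∧ Z ⊆ Y

/-- `𝔛` is a Boolean algebra of sets. -/
def IsBoolAlg {α : Type} (𝔛 : Set (Set α)) : Prop :=
  Set.univ ∈ 𝔛 ∧ ∅ ∈ 𝔛 ∧
  (∀ A ∈ 𝔛, ∀ B ∈ 𝔛, A ∪ B ∈ 𝔛) ∧ (∀ A ∈ 𝔛, ∀ B ∈ 𝔛, A ∩ B ∈ 𝔛) ∧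
  (∀ A ∈ 𝔛, Aᶜ ∈ 𝔛)

/-- A filter on the Boolean algebra `𝔛`. -/
def IsBAFilter {α : Type} (𝔛 F : Set (Set α)) : Prop :=
  F ⊆ 𝔛 ∧ F.Nonempty ∧ ∅ ∉ F ∧
  (∀ A ∈ F, ∀ B ∈ 𝔛, A ⊆ B → B ∈ F) ∧
  (∀ A ∈ F, ∀ B ∈ F, A ∩ B ∈ F)

/-- An ultrafilter on the Boolean algebra `𝔛`: a maximal filter. -/
def IsBAUltra {α : Type} (𝔛 F : Set (Set α)) : Prop :=
  IsBAFilter 𝔛 F ∧ ∀ G, IsBAFilter 𝔛 G → F ⊆ G → G = F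

/-! ### Scott sets -/

/-- Oracle partial recursive functions: partial recursive in the oracle `O`. -/
inductive RecursiveIn (O : ℕ →. ℕ) : (ℕ →. ℕ) → Prop
  | oracle : RecursiveIn O O
  | zero : RecursiveIn O (pure 0)
  | succ : RecursiveIn O Nat.succ
  | left : RecursiveIn O ↑fun n : ℕ => n.unpair.1
  | right : RecursiveIn O ↑fun n : ℕ => n.unpair.2
  | pair {f g} : RecursiveIn O f → RecursiveIn O g →
      RecursiveIn O fun n => Nat.pair <$> f n <*> g n
  | comp {f g} : RecursiveIn O f → RecursiveIn O g →
      RecursiveIn O fun n => g n >>= f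
  | prec {f g} : RecursiveIn O f → RecursiveIn O g →
      RecursiveIn O (Nat.unpaired fun a n =>
        n.rec (f a) fun y IH => do let i ← IH; g (Nat.pair a (Nat.pair y i)))
  | rfind {f} : RecursiveIn O f →
      RecursiveIn O fun a => Nat.rfind fun n => (fun m => m = 0) <$> f (Nat.pair a n)

/-- The characteristic function of a set of natural numbers. -/
noncomputable def chi (A : Set ℕ) : ℕ →. ℕ :=
  fun n => Part.some (@ite _ (n ∈ A) (Classical.propDecidable _) 1 0)

/-- Turing reducibility: `B ≤_T A`. -/
def TuringLe (B A : Set ℕ) : Prop := RecursiveIn (chi A) (chi B)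

/-- A set of naturals coding a binary tree (codes of finite binary strings,
closed under initial segments). -/
def IsTreeCode (T : Set ℕ) : Prop :=
  (∀ n ∈ T, ∃ l : List Bool, Encodable.encode l = n) ∧
  (∀ l₁ l₂ : List Bool, l₁ <+: l₂ → Encodable.encode l₂ ∈ T → Encodable.encode l₁ ∈ T)

/-- `B` (as the characteristic function of a branch) is an infinite branch of the
binary tree coded by `T`. -/
def IsBranchThrough (B T : Set ℕ) : Prop :=
  ∀ n : ℕ, ∃ l : List Bool, l.length = n ∧
    (∀ i : Fin l.length, (l.get i = true ↔ (i : ℕ) ∈ B)) ∧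
    Encodable.encode l ∈ T

/-- A Scott set: a nonempty Boolean algebra of subsets of `ω` closed under relative
recursion and containing an infinite branch of every infinite binary tree coded in it. -/
def IsScottSet (𝔛 : Set (Set ℕ)) : Prop :=
  𝔛.Nonempty ∧
  (∀ A ∈ 𝔛, ∀ B ∈ 𝔛, A ∪ B ∈ 𝔛) ∧
  (∀ A ∈ 𝔛, Aᶜ ∈ 𝔛) ∧
  (∀ A ∈ 𝔛, ∀ B : Set ℕ, TuringLe B A → B ∈ 𝔛) ∧
  (∀ T ∈ 𝔛, IsTreeCode T → T.Infinite → ∃ B ∈ 𝔛, IsBranchThrough B T)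

/-- The sets represented in the theory `T`. -/
def repSet (T : Set Fml) : Set (Set ℕ) :=
  {A | ∃ φ : Fml, Fml.IsFO φ ∧ φ.freeN ⊆ {0} ∧
    ∀ n : ℕ, (n ∈ A → Proves T (φ.substN 0 (numeral n))) ∧
      (n ∉ A → Proves T (Fml.not (φ.substN 0 (numeral n))))}

/-- Martin's axiom. -/
def MartinsAxiom : Prop :=
  ∀ (P : Type) (_ : PartialOrder P),
    (∀ A : Set P, ¬A.Countable → ∃ x ∈ A, ∃ y ∈ A, x ≠ y ∧ ∃ z, z ≤ x ∧ z ≤ y) →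
    ∀ 𝒟 : Set (Set P), (∀ D ∈ 𝒟, ∀ x : P, ∃ y ∈ D, y ≤ x) →
      Cardinal.mk 𝒟 < Cardinal.continuum →
      ∃ F : Set P, F.Nonempty ∧ (∀ x ∈ F, ∀ y, x ≤ y → y ∈ F) ∧
        (∀ x ∈ F, ∀ y ∈ F, ∃ z ∈ F, z ≤ x ∧ z ≤ y) ∧
        ∀ D ∈ 𝒟, (F ∩ D).Nonempty

/-!
Write `c = [f]`. By Łoś's theorem, `N ⊨ a ∈ [f]` iff `{b | K ⊨ j(a) ∈ f(b)} ∈ U`, and this set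
is the `a`-th slice of `B = {⟨a, b⟩ | K ⊨ j(a) ∈ f(b)}`. Transported along `ϱ`, `B` is
arithmetical in the code `C` of the diagram of `K₀` and in the graphs of `ϱ ∘ j` and `ϱ ∘ f`, so
`B ∈ 𝔛` by arithmetical comprehension; definability of `U` then gives `{a | (B)_a ∈ U} ∈ 𝔛`.

The coding formula `x ∈ y` is positive existential, so Łoś's theorem is only needed for such
formulas, and for them it holds for any filter: a witness for `∃` is chosen uniformly in `b`
as a coded function, taking least witnesses, which arithmetical comprehension provides.
-/

section Satisfaction

variable {M : Type} {S : AStr M} {X : Set (Set M)} {v : ℕ → M} {w : ℕ → Set M}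

@[simp] lemma sat_not {φ : Fml} : Sat S X v w (.not φ) ↔ ¬ Sat S X v w φ := Iff.rfl

@[simp] lemma sat_imp {φ ψ : Fml} :
    Sat S X v w (.imp φ ψ) ↔ (Sat S X v w φ → Sat S X v w ψ) := Iff.rfl

@[simp] lemma sat_and {φ ψ : Fml} :
    Sat S X v w (φ.and ψ) ↔ Sat S X v w φ ∧ Sat S X v w ψ := by
  simp [Fml.and, Sat]

@[simp] lemma sat_or {φ ψ : Fml} :
    Sat S X v w (φ.or ψ) ↔ Sat S X v w φ ∨ Sat S X v w ψ := by
  simp [Fml.or, Sat, or_iff_not_imp_left]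

@[simp] lemma sat_all {x : ℕ} {φ : Fml} :
    Sat S X v w (.all x φ) ↔ ∀ a, Sat S X (Function.update v x a) w φ := Iff.rfl

@[simp] lemma sat_ex {x : ℕ} {φ : Fml} :
    Sat S X v w (.ex x φ) ↔ ∃ a, Sat S X (Function.update v x a) w φ := by
  simp [Fml.ex, Sat]

@[simp] lemma sat_eq {t u : PTerm} : Sat S X v w (.eq t u) ↔ t.val S v = u.val S v := Iff.rfl

@[simp] lemma sat_lt {t u : PTerm} : Sat S X v w (.lt t u) ↔ S.lt (t.val S v) (u.val S v) :=
  Iff.rfl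

@[simp] lemma sat_mem {t : PTerm} {k : ℕ} : Sat S X v w (.mem t k) ↔ t.val S v ∈ w k := Iff.rfl

@[simp] lemma satFO_eq {t u : PTerm} : SatFO S v (.eq t u) ↔ t.val S v = u.val S v := Iff.rfl

@[simp] lemma satFO_lt {t u : PTerm} : SatFO S v (.lt t u) ↔ S.lt (t.val S v) (u.val S v) :=
  Iff.rfl

@[simp] lemma satFO_and {φ ψ : Fml} : SatFO S v (φ.and ψ) ↔ SatFO S v φ ∧ SatFO S v ψ := sat_and

@[simp] lemma satFO_ex {x : ℕ} {φ : Fml} :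
    SatFO S v (.ex x φ) ↔ ∃ a, SatFO S (Function.update v x a) φ := sat_ex

lemma PTerm.val_update_of_notMem {t : PTerm} {k : ℕ} (h : k ∉ t.vars) (a : M) :
    t.val S (Function.update v k a) = t.val S v := by
  induction t with
  | var n =>
    simp only [PTerm.vars, Finset.mem_singleton] at h
    simp [PTerm.val, Function.update_of_ne (Ne.symm h)]
  | zero | one => rfl
  | add t u iht ihu | mul t u iht ihu =>
    simp only [PTerm.vars, Finset.mem_union, not_or] at h
    simp [PTerm.val, iht h.1, ihu h.2]

lemma PTerm.notMem_vars {t : PTerm} {b k : ℕ} (h : ∀ j ∈ t.vars, j < b) (hk : b ≤ k) :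
    k ∉ t.vars :=
  fun hm => absurd (h k hm) (Nat.not_lt.2 hk)

lemma PTerm.val_update_update {t : PTerm} {b : ℕ} (h : ∀ k ∈ t.vars, k < b) (α β : M) :
    t.val S (Function.update (Function.update v b α) (b + 1) β) = t.val S v := by
  rw [PTerm.val_update_of_notMem (PTerm.notMem_vars h (by omega)),
    PTerm.val_update_of_notMem (PTerm.notMem_vars h le_rfl)]

@[simp] lemma vars_numeral (n : ℕ) : (numeral n).vars = ∅ := by
  induction n with
  | zero => rfl
  | succ n ih => simp [numeral, PTerm.vars, ih]

@[simp] lemma val_numeral (n : ℕ) : (numeral n).val S v = S.num n := by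
  induction n with
  | zero => rfl
  | succ n ih => simp [numeral, PTerm.val, ih, AStr.num]

end Satisfaction

namespace PAminusSem

variable {M : Type} {S : AStr M} (hP : PAminusSem S)
include hP

lemma add_assoc (a b c : M) : S.add a (S.add b c) = S.add (S.add a b) c := hP.1 a b c
lemma add_comm (a b : M) : S.add a b = S.add b a := hP.2.1 a b
lemma mul_comm (a b : M) : S.mul a b = S.mul b a := hP.2.2.2.1 a b
lemma mul_add (a b c : M) : S.mul a (S.add b c) = S.add (S.mul a b) (S.mul a c) :=
  hP.2.2.2.2.1 a b c
lemma add_zero (a : M) : S.add a S.zero = a := hP.2.2.2.2.2.1 a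
lemma mul_zero (a : M) : S.mul a S.zero = S.zero := hP.2.2.2.2.2.2.1 a
lemma mul_one (a : M) : S.mul a S.one = a := hP.2.2.2.2.2.2.2.1 a
lemma lt_trans {a b c : M} : S.lt a b → S.lt b c → S.lt a c := hP.2.2.2.2.2.2.2.2.1 a b c
lemma lt_irrefl (a : M) : ¬ S.lt a a := hP.2.2.2.2.2.2.2.2.2.1 a
lemma lt_trichotomy (a b : M) : S.lt a b ∨ a = b ∨ S.lt b a := hP.2.2.2.2.2.2.2.2.2.2.1 a b
lemma add_lt_add_right {a b : M} (c : M) : S.lt a b → S.lt (S.add a c) (S.add b c) :=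
  hP.2.2.2.2.2.2.2.2.2.2.2.1 a b c
lemma mul_lt_mul_right {a b c : M} : S.lt S.zero c → S.lt a b → S.lt (S.mul a c) (S.mul b c) :=
  hP.2.2.2.2.2.2.2.2.2.2.2.2.1 a b c
lemma exists_add_of_lt {a b : M} : S.lt a b → ∃ c, S.add a c = b :=
  hP.2.2.2.2.2.2.2.2.2.2.2.2.2.1 a b
lemma zero_lt_one : S.lt S.zero S.one := hP.2.2.2.2.2.2.2.2.2.2.2.2.2.2.1
lemma eq_one_or_one_lt {a : M} : S.lt S.zero a → a = S.one ∨ S.lt S.one a :=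
  hP.2.2.2.2.2.2.2.2.2.2.2.2.2.2.2.1 a
lemma eq_zero_or_pos (a : M) : a = S.zero ∨ S.lt S.zero a := hP.2.2.2.2.2.2.2.2.2.2.2.2.2.2.2.2 a

lemma zero_add (a : M) : S.add S.zero a = a := by rw [hP.add_comm, hP.add_zero]
lemma one_mul (a : M) : S.mul S.one a = a := by rw [hP.mul_comm, hP.mul_one]
lemma zero_mul (a : M) : S.mul S.zero a = S.zero := by rw [hP.mul_comm, hP.mul_zero]

lemma add_mul (a b c : M) : S.mul (S.add a b) c = S.add (S.mul a c) (S.mul b c) := by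
  rw [hP.mul_comm, hP.mul_add, hP.mul_comm c a, hP.mul_comm c b]

lemma two_mul (a : M) : S.mul S.two a = S.add a a := by
  rw [AStr.two, hP.add_mul, hP.one_mul]

lemma add_lt_add_left {a b : M} (c : M) (h : S.lt a b) : S.lt (S.add c a) (S.add c b) := by
  rw [hP.add_comm c a, hP.add_comm c b]; exact hP.add_lt_add_right c h

lemma mul_lt_mul_left {a b c : M} (hc : S.lt S.zero c) (h : S.lt a b) :
    S.lt (S.mul c a) (S.mul c b) := by
  rw [hP.mul_comm c a, hP.mul_comm c b]; exact hP.mul_lt_mul_right hc h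

lemma eq_of_not_lt_of_not_lt {a b : M} (h₁ : ¬ S.lt a b) (h₂ : ¬ S.lt b a) : a = b :=
  ((hP.lt_trichotomy a b).resolve_left h₁).resolve_right h₂

lemma add_left_cancel {a b c : M} (h : S.add c a = S.add c b) : a = b :=
  hP.eq_of_not_lt_of_not_lt (fun h' => hP.lt_irrefl _ (h ▸ hP.add_lt_add_left c h'))
    (fun h' => hP.lt_irrefl _ (h ▸ hP.add_lt_add_left c h'))

lemma not_lt_zero (a : M) : ¬ S.lt a S.zero := by
  rcases hP.eq_zero_or_pos a with rfl | h
  · exact hP.lt_irrefl _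
  · exact fun h' => hP.lt_irrefl _ (hP.lt_trans h h')

lemma lt_succ_self (a : M) : S.lt a (S.add a S.one) := by
  simpa only [hP.zero_add, hP.add_comm S.one] using hP.add_lt_add_right a hP.zero_lt_one

lemma zero_lt_two : S.lt S.zero S.two :=
  hP.lt_trans hP.zero_lt_one (hP.lt_succ_self S.one)

lemma succ_le_of_lt {a b : M} (h : S.lt a b) : S.le (S.add a S.one) b := by
  obtain ⟨c, rfl⟩ := hP.exists_add_of_lt h
  rcases hP.eq_zero_or_pos c with rfl | hc
  · rw [hP.add_zero] at h; exact absurd h (hP.lt_irrefl a)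
  · rcases hP.eq_one_or_one_lt hc with rfl | hc
    · exact Or.inr rfl
    · exact Or.inl (hP.add_lt_add_left a hc)

lemma le_of_lt_succ {a b : M} (h : S.lt b (S.add a S.one)) : S.le b a := by
  rcases hP.lt_trichotomy b a with h' | h' | h'
  · exact Or.inl h'
  · exact Or.inr h'
  · rcases hP.succ_le_of_lt h' with h₁ | h₁
    · exact absurd (hP.lt_trans h h₁) (hP.lt_irrefl _)
    · exact absurd (h₁ ▸ h) (hP.lt_irrefl _)

lemma lt_of_lt_of_le {a b c : M} (h : S.lt a b) (h' : S.le b c) : S.lt a c := by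
  rcases h' with h' | rfl
  · exact hP.lt_trans h h'
  · exact h

lemma le_trans {a b c : M} (h : S.le a b) (h' : S.le b c) : S.le a c := by
  rcases h with h | rfl
  · exact Or.inl (hP.lt_of_lt_of_le h h')
  · exact h'

lemma le_add_right (a b : M) : S.le a (S.add a b) := by
  rcases hP.eq_zero_or_pos b with rfl | h
  · exact Or.inr (hP.add_zero a).symm
  · exact Or.inl (by simpa only [hP.add_zero] using hP.add_lt_add_left a h)

lemma mul_le_mul_right {a b : M} (c : M) (h : S.le a b) : S.le (S.mul a c) (S.mul b c) := by
  rcases hP.eq_zero_or_pos c with rfl | hc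
  · exact Or.inr (by rw [hP.mul_zero, hP.mul_zero])
  · rcases h with h | rfl
    · exact Or.inl (hP.mul_lt_mul_right hc h)
    · exact Or.inr rfl

lemma add_le_add_right {a b : M} (c : M) (h : S.le a b) : S.le (S.add a c) (S.add b c) := by
  rcases h with h | rfl
  · exact Or.inl (hP.add_lt_add_right c h)
  · exact Or.inr rfl

lemma mul_succ_succ (n : M) :
    S.add (S.mul n (S.add n S.one)) (S.mul S.two (S.add n S.one)) =
      S.mul (S.add n S.one) (S.add (S.add n S.one) S.one) := by
  rw [hP.mul_add (S.add n S.one), hP.mul_one, hP.add_mul n S.one, hP.one_mul, hP.two_mul,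
    hP.add_assoc]

lemma cantor_lt_cantor {a b a' b' : M} (h : S.lt (S.add a b) (S.add a' b')) :
    S.lt (S.add (S.mul (S.add a b) (S.add (S.add a b) S.one)) (S.mul S.two a))
      (S.add (S.mul (S.add a' b') (S.add (S.add a' b') S.one)) (S.mul S.two a')) := by
  set n := S.add a b
  set n' := S.add a' b'
  -- `2⟨a, b⟩ = n(n+1) + 2a < n(n+1) + 2(n+1) = (n+1)(n+2) ≤ n'(n'+1) ≤ 2⟨a', b'⟩`
  have h2a : S.lt (S.mul S.two a) (S.mul S.two (S.add n S.one)) :=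
    hP.mul_lt_mul_left hP.zero_lt_two
      (hP.lt_of_lt_of_le (hP.lt_succ_self a) (hP.add_le_add_right S.one (hP.le_add_right a b)))
  have hstep := hP.add_lt_add_left (S.mul n (S.add n S.one)) h2a
  rw [hP.mul_succ_succ] at hstep
  have hn : S.le (S.add n S.one) n' := hP.succ_le_of_lt h
  refine hP.lt_of_lt_of_le hstep (hP.le_trans (hP.mul_le_mul_right _ hn) ?_)
  rw [hP.mul_comm n', hP.mul_comm n']
  exact hP.le_trans (hP.mul_le_mul_right n' (hP.add_le_add_right S.one hn))
    (hP.le_add_right _ _)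

lemma pairRel_inj {p a b a' b' : M} (hp : S.PairRel p a b) (hp' : S.PairRel p a' b') :
    a = a' ∧ b = b' := by
  unfold AStr.PairRel at hp hp'
  have heq := hp.symm.trans hp'
  have hn : S.add a b = S.add a' b' := hP.eq_of_not_lt_of_not_lt
    (fun h => hP.lt_irrefl _ (heq ▸ hP.cantor_lt_cantor h))
    (fun h => hP.lt_irrefl _ (heq ▸ hP.cantor_lt_cantor h))
  rw [hn] at heq
  have h2 := hP.add_left_cancel heq
  rw [hP.two_mul, hP.two_mul] at h2
  have ha : a = a' := hP.eq_of_not_lt_of_not_lt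
    (fun h => hP.lt_irrefl _ (h2 ▸ hP.lt_trans (hP.add_lt_add_right a h) (hP.add_lt_add_left a' h)))
    (fun h => hP.lt_irrefl _ (h2 ▸ hP.lt_trans (hP.add_lt_add_right a' h) (hP.add_lt_add_left a h)))
  subst ha
  exact ⟨rfl, hP.add_left_cancel hn⟩

lemma pairRel_add_of_two_mul {a b c : M}
    (hc : S.mul S.two c = S.mul (S.add a b) (S.add (S.add a b) S.one)) :
    S.PairRel (S.add c a) a b := by
  rw [AStr.PairRel, hP.mul_add, hc]

end PAminusSem

namespace Fml

def pairF (p a b : PTerm) : Fml :=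
  .eq (.mul (.add .one .one) p)
    (.add (.mul (.add a b) (.add (.add a b) .one)) (.mul (.add .one .one) a))

-- The `ℕ` argument `q` or `b` of each formula below names the variables it binds (`q`, resp.
-- `b, b + 1, …`), which must not occur in its term arguments.

def modF (a m r : PTerm) (q : ℕ) : Fml :=
  (Fml.lt r m).and (.ex q (.eq a (.add (.mul (.var q) m) r)))

def betaF (c i x : PTerm) (b : ℕ) : Fml :=
  .ex b (.ex (b + 1) ((pairF c (.var b) (.var (b + 1))).and
    (modF (.var b) (.add .one (.mul (.add i .one) (.var (b + 1)))) x (b + 2))))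

def seqLenF (s l : PTerm) (b : ℕ) : Fml := .ex b (pairF s (.var b) l)

def seqAtF (s i x : PTerm) (b : ℕ) : Fml :=
  .ex b (.ex (b + 1) ((pairF s (.var b) (.var (b + 1))).and
    ((Fml.lt i (.var (b + 1))).and (betaF (.var b) i x (b + 2)))))

def memF (x y : PTerm) (b : ℕ) : Fml :=
  (Fml.lt x y).and (.ex b (.ex (b + 1) ((pairF y (.var b) (.var (b + 1))).and
    ((Fml.lt .one (.add .one (.mul (.add x .one) (.var (b + 1))))).and
      (modF (.var b) (.add .one (.mul (.add x .one) (.var (b + 1)))) .one (b + 2))))))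

def memFml : Fml := memF (.var 0) (.var 1) 2

def sliceMemF (k : ℕ) (a x : PTerm) (q : ℕ) : Fml :=
  .ex q ((pairF (.var q) a x).and (.mem (.var q) k))

def conj : List Fml → Fml
  | [] => .eq .zero .zero
  | φ :: l => φ.and (conj l)

end Fml

section Builders

open Fml

variable {M : Type} {S : AStr M} {X : Set (Set M)} {v : ℕ → M} {w : ℕ → Set M}

@[simp] lemma sat_pairF {p a b : PTerm} :
    Sat S X v w (pairF p a b) ↔ S.PairRel (p.val S v) (a.val S v) (b.val S v) := Iff.rfl

lemma sat_modF {a m r : PTerm} {q : ℕ} (ha : q ∉ a.vars) (hm : q ∉ m.vars) (hr : q ∉ r.vars) :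
    Sat S X v w (modF a m r q) ↔ S.ModRel (a.val S v) (m.val S v) (r.val S v) := by
  simp [modF, AStr.ModRel, PTerm.val, PTerm.val_update_of_notMem, ha, hm, hr]

lemma sat_betaF {c i x : PTerm} {b : ℕ} (hc : ∀ k ∈ c.vars, k < b)
    (hi : ∀ k ∈ i.vars, k < b) (hx : ∀ k ∈ x.vars, k < b) :
    Sat S X v w (betaF c i x b) ↔ S.BetaRel (c.val S v) (i.val S v) (x.val S v) := by
  have hmod : ∀ v' : ℕ → M,
      Sat S X v' w (modF (.var b) (.add .one (.mul (.add i .one) (.var (b + 1)))) x (b + 2)) ↔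
        S.ModRel (v' b) (S.add S.one (S.mul (S.add (i.val S v') S.one) (v' (b + 1))))
          (x.val S v') := fun v' => by
    rw [sat_modF (by simp [PTerm.vars]) (by simp [PTerm.vars, PTerm.notMem_vars hi])
      (PTerm.notMem_vars hx (by omega))]
    rfl
  simp only [betaF, sat_ex, sat_and, sat_pairF, hmod, AStr.BetaRel, PTerm.val,
    PTerm.val_update_update hc, PTerm.val_update_update hi, PTerm.val_update_update hx,
    Function.update_of_ne (Nat.ne_of_lt b.lt_succ_self), Function.update_self]

lemma sat_seqLenF {s l : PTerm} {b : ℕ} (hs : ∀ k ∈ s.vars, k < b)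
    (hl : ∀ k ∈ l.vars, k < b) :
    Sat S X v w (seqLenF s l b) ↔ S.SeqLen (s.val S v) (l.val S v) := by
  simp [seqLenF, AStr.SeqLen, PTerm.val,
    PTerm.val_update_of_notMem (PTerm.notMem_vars hs le_rfl),
    PTerm.val_update_of_notMem (PTerm.notMem_vars hl le_rfl)]

lemma sat_seqAtF {s i x : PTerm} {b : ℕ} (hs : ∀ k ∈ s.vars, k < b)
    (hi : ∀ k ∈ i.vars, k < b) (hx : ∀ k ∈ x.vars, k < b) :
    Sat S X v w (seqAtF s i x b) ↔ S.SeqAt (s.val S v) (i.val S v) (x.val S v) := by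
  have hbeta : ∀ v' : ℕ → M, Sat S X v' w (betaF (.var b) i x (b + 2)) ↔
      S.BetaRel (v' b) (i.val S v') (x.val S v') := fun v' =>
    sat_betaF (by simp [PTerm.vars]) (fun k h => by have := hi _ h; omega)
      (fun k h => by have := hx _ h; omega)
  simp only [seqAtF, sat_ex, sat_and, sat_lt, sat_pairF, hbeta, AStr.SeqAt, PTerm.val,
    PTerm.val_update_update hs, PTerm.val_update_update hi, PTerm.val_update_update hx,
    Function.update_of_ne (Nat.ne_of_lt b.lt_succ_self), Function.update_self]

lemma sat_memF {x y : PTerm} {b : ℕ} (hx : ∀ k ∈ x.vars, k < b) (hy : ∀ k ∈ y.vars, k < b) :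
    Sat S X v w (memF x y b) ↔ S.MemRel (x.val S v) (y.val S v) := by
  have hmod : ∀ v' : ℕ → M,
      Sat S X v' w (modF (.var b) (.add .one (.mul (.add x .one) (.var (b + 1)))) .one (b + 2)) ↔
        S.ModRel (v' b) (S.add S.one (S.mul (S.add (x.val S v') S.one) (v' (b + 1)))) S.one :=
    fun v' => by
      rw [sat_modF (by simp [PTerm.vars]) (by simp [PTerm.vars, PTerm.notMem_vars hx])
        (by simp [PTerm.vars])]
      rfl
  simp only [memF, sat_and, sat_lt, sat_ex, sat_pairF, hmod, AStr.MemRel, PTerm.val,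
    PTerm.val_update_update hx, PTerm.val_update_update hy,
    Function.update_of_ne (Nat.ne_of_lt b.lt_succ_self), Function.update_self]

lemma satFO_memFml : SatFO S v memFml ↔ S.MemRel (v 0) (v 1) :=
  sat_memF (by simp [PTerm.vars]) (by simp [PTerm.vars])

@[simp] lemma sat_sliceMemF {k q i j : ℕ} (hi : i < q) (hj : j < q) :
    Sat S X v w (sliceMemF k (.var i) (.var j) q) ↔ v j ∈ S.SliceAt (w k) (v i) := by
  simp [sliceMemF, AStr.SliceAt, PTerm.val, Function.update_of_ne hi.ne,
    Function.update_of_ne hj.ne]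

lemma sat_conj {l : List Fml} : Sat S X v w (conj l) ↔ ∀ φ ∈ l, Sat S X v w φ := by
  induction l with
  | nil => simp [conj]
  | cons φ l ih => simp [conj, ih]

@[simp] lemma isArith_and {φ ψ : Fml} : (φ.and ψ).IsArith ↔ φ.IsArith ∧ ψ.IsArith := Iff.rfl
@[simp] lemma isArith_or {φ ψ : Fml} : (φ.or ψ).IsArith ↔ φ.IsArith ∧ ψ.IsArith := Iff.rfl
@[simp] lemma isArith_ex {x : ℕ} {φ : Fml} : (Fml.ex x φ).IsArith ↔ φ.IsArith := Iff.rfl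
@[simp] lemma isArith_pairF {p a b : PTerm} : (pairF p a b).IsArith := trivial
@[simp] lemma isArith_sliceMemF {k q : ℕ} {a x : PTerm} : (sliceMemF k a x q).IsArith :=
  ⟨trivial, trivial⟩

lemma isArith_conj {l : List Fml} (h : ∀ φ ∈ l, φ.IsArith) : (conj l).IsArith := by
  induction l with
  | nil => trivial
  | cons φ l ih =>
    simp only [List.mem_cons, forall_eq_or_imp] at h
    exact isArith_and.2 ⟨h.1, ih h.2⟩

end Builders

section Comprehension

open Fml

variable {M : Type} {S : AStr M} {𝔛 : Set (Set M)}

lemma setOf_mem_of_sat (hACA : SatACA0 S 𝔛) {φ : Fml} (hφ : φ.IsArith) {w : ℕ → Set M}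
    (hw : ∀ k, w k ∈ 𝔛) (v : ℕ → M) {P : M → Prop}
    (hP : ∀ a, Sat S 𝔛 (Function.update v 0 a) w φ ↔ P a) : {a | P a} ∈ 𝔛 := by
  simpa only [hP] using hACA.2.2 φ 0 hφ v w hw

lemma inter_mem (hACA : SatACA0 S 𝔛) {A B : Set M} (hA : A ∈ 𝔛) (hB : B ∈ 𝔛) :
    A ∩ B ∈ 𝔛 :=
  setOf_mem_of_sat hACA (φ := (Fml.mem (.var 0) 0).and (.mem (.var 0) 1)) (by simp [Fml.IsArith])
    (w := fun k => if k = 0 then A else B) (by intro k; split <;> assumption)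
    (fun _ => S.zero) (fun a => by simp [PTerm.val]; rfl)

lemma sliceAt_mem (hACA : SatACA0 S 𝔛) {A : Set M} (hA : A ∈ 𝔛) (a : M) :
    S.SliceAt A a ∈ 𝔛 :=
  setOf_mem_of_sat hACA (φ := sliceMemF 0 (.var 1) (.var 0) 2) isArith_sliceMemF
    (w := fun _ => A) (fun _ => hA) (fun _ => a) (P := (· ∈ S.SliceAt A a)) (fun b => by simp)

lemma induction_of_mem (hACA : SatACA0 S 𝔛) {P : M → Prop} (hP : {a | P a} ∈ 𝔛)
    (h0 : P S.zero) (hs : ∀ a, P a → P (S.add a S.one)) (a : M) : P a :=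
  hACA.2.1 _ hP h0 hs a

lemma exists_two_mul_eq (hACA : SatACA0 S 𝔛) (h𝔛 : 𝔛.Nonempty) (n : M) :
    ∃ c, S.mul S.two c = S.mul n (S.add n S.one) := by
  have hP := hACA.1
  refine induction_of_mem hACA (P := fun n => ∃ c, S.mul S.two c = S.mul n (S.add n S.one))
    (setOf_mem_of_sat hACA
      (φ := .ex 1 (.eq (.mul (.add .one .one) (.var 1)) (.mul (.var 0) (.add (.var 0) .one))))
      trivial (w := fun _ => h𝔛.some) (fun _ => h𝔛.some_mem) (fun _ => S.zero)
      (fun a => by simp [PTerm.val, AStr.two])) ⟨S.zero, ?_⟩ ?_ n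
  · rw [hP.mul_zero, hP.zero_mul]
  · rintro a ⟨c, hc⟩
    exact ⟨S.add c (S.add a S.one), by rw [hP.mul_add, hc, hP.mul_succ_succ]⟩

lemma exists_pairRel (hACA : SatACA0 S 𝔛) (h𝔛 : 𝔛.Nonempty) (a b : M) :
    ∃ p, S.PairRel p a b := by
  obtain ⟨c, hc⟩ := exists_two_mul_eq hACA h𝔛 (S.add a b)
  exact ⟨S.add c a, hACA.1.pairRel_add_of_two_mul hc⟩

lemma exists_least (hACA : SatACA0 S 𝔛) {A : Set M} (hA : A ∈ 𝔛) {a : M} (ha : a ∈ A) :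
    ∃ m ∈ A, ∀ y, S.lt y m → y ∉ A := by
  have hP := hACA.1
  by_contra! hne
  have hbelow : ∀ z y, S.le y z → y ∉ A := by
    refine induction_of_mem hACA (P := fun z => ∀ y, S.le y z → y ∉ A) (setOf_mem_of_sat hACA
      (φ := .all 1 (.imp ((Fml.lt (.var 1) (.var 0)).or (.eq (.var 1) (.var 0)))
        (.not (.mem (.var 1) 0)))) (by simp [Fml.IsArith])
      (w := fun _ => A) (fun _ => hA) (fun _ => S.zero)
      (fun z => by simp [PTerm.val, AStr.le])) ?_ ?_
    · rintro y (hy | rfl) hyA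
      · exact hP.not_lt_zero y hy
      · obtain ⟨y', hy', -⟩ := hne _ hyA
        exact hP.not_lt_zero y' hy'
    · rintro z hz y (hy | rfl) hyA
      · exact hz y (hP.le_of_lt_succ hy) hyA
      · obtain ⟨y', hy', hy'A⟩ := hne _ hyA
        exact hz y' (hP.le_of_lt_succ hy') hy'A
  exact hbelow a a (Or.inr rfl) ha

lemma exists_mem_sliceAt_iff (hACA : SatACA0 S 𝔛) (h𝔛 : 𝔛.Nonempty) {ψ : Fml}
    (hψ : ψ.IsArith) {w : ℕ → Set M} (hw : ∀ k, w k ∈ 𝔛) (v : ℕ → M) {R : M → M → Prop}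
    (hR : ∀ q b u, Sat S 𝔛 (Function.update (Function.update (Function.update v 0 q) 1 b) 2 u)
      w ψ ↔ R b u) :
    ∃ A ∈ 𝔛, ∀ b u, u ∈ S.SliceAt A b ↔ R b u := by
  refine ⟨_, setOf_mem_of_sat hACA (φ := .ex 1 (.ex 2 ((pairF (.var 0) (.var 1) (.var 2)).and ψ)))
    (by simp [hψ]) hw v (P := fun q => ∃ b u, S.PairRel q b u ∧ R b u)
    (fun q => by simp [hR, PTerm.val]), fun b u => ⟨?_, fun h => ?_⟩⟩
  · rintro ⟨p, hp, b', u', hp', h⟩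
    obtain ⟨rfl, rfl⟩ := hACA.1.pairRel_inj hp hp'
    exact h
  · obtain ⟨p, hp⟩ := exists_pairRel hACA h𝔛 b u
    exact ⟨p, hp, b, u, hp, h⟩

end Comprehension

section CodedFunctions

open Fml

variable {M : Type} {S : AStr M} {𝔛 : Set (Set M)}

lemma codedFun_of_sliceAt_iff {F : M → M} {A : Set M} (hA : A ∈ 𝔛)
    (h : ∀ b u, u ∈ S.SliceAt A b ↔ u = F b) : S.CodedFun 𝔛 F :=
  ⟨A, hA, fun a b => by rw [h, eq_comm]⟩

lemma codedFun_of_sat_iff_eq (hACA : SatACA0 S 𝔛) (h𝔛 : 𝔛.Nonempty) {ψ : Fml}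
    (hψ : ψ.IsArith) {w : ℕ → Set M} (hw : ∀ k, w k ∈ 𝔛) (v : ℕ → M) {F : M → M}
    (hF : ∀ q b u, Sat S 𝔛 (Function.update (Function.update (Function.update v 0 q) 1 b) 2 u)
      w ψ ↔ u = F b) :
    S.CodedFun 𝔛 F := by
  obtain ⟨A, hA, hAF⟩ := exists_mem_sliceAt_iff hACA h𝔛 hψ hw v hF
  exact codedFun_of_sliceAt_iff hA hAF

lemma codedFun_const (hACA : SatACA0 S 𝔛) (h𝔛 : 𝔛.Nonempty) (c : M) :
    S.CodedFun 𝔛 (fun _ => c) :=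
  codedFun_of_sat_iff_eq hACA h𝔛 (ψ := .eq (.var 2) (.var 3)) trivial
    (fun _ => h𝔛.some_mem) (fun _ => c) (fun q b u => by simp [PTerm.val])

lemma AStr.CodedFun.comp {F G : M → M} (hG : S.CodedFun 𝔛 G) (hACA : SatACA0 S 𝔛)
    (h𝔛 : 𝔛.Nonempty) (hF : S.CodedFun 𝔛 F) : S.CodedFun 𝔛 (fun b => G (F b)) := by
  obtain ⟨AF, hAF, hF⟩ := hF
  obtain ⟨AG, hAG, hG⟩ := hG
  refine codedFun_of_sat_iff_eq hACA h𝔛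
    (ψ := .ex 3 ((sliceMemF 0 (.var 1) (.var 3) 4).and (sliceMemF 1 (.var 3) (.var 2) 4)))
    (by simp) (w := fun k => if k = 0 then AF else AG) (by intro k; split <;> assumption)
    (fun _ => S.zero) (fun q b u => ?_)
  simp [← hF, ← hG, eq_comm]

lemma exists_codedFun_mem_sliceAt (hACA : SatACA0 S 𝔛) (h𝔛 : 𝔛.Nonempty) {D : Set M}
    (hD : D ∈ 𝔛) :
    ∃ F : M → M, S.CodedFun 𝔛 F ∧ ∀ b, (∃ u, u ∈ S.SliceAt D b) → F b ∈ S.SliceAt D b := by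
  have hP := hACA.1
  let R : M → M → Prop := fun b u =>
    (u ∈ S.SliceAt D b ∧ ∀ u', S.lt u' u → u' ∉ S.SliceAt D b) ∨
      (u = S.zero ∧ ∀ u', u' ∉ S.SliceAt D b)
  have hex : ∀ b, ∃ u, R b u := by
    intro b
    by_cases h : ∃ u, u ∈ S.SliceAt D b
    · obtain ⟨u, hu⟩ := h
      obtain ⟨m, hm, hmin⟩ := exists_least hACA (sliceAt_mem hACA hD b) hu
      exact ⟨m, Or.inl ⟨hm, hmin⟩⟩
    · exact ⟨S.zero, Or.inr ⟨rfl, fun u hu => h ⟨u, hu⟩⟩⟩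
  have huniq : ∀ b u u', R b u → R b u' → u = u' := by
    rintro b u u' (⟨hu, hu'⟩ | ⟨rfl, hu⟩) (⟨hv, hv'⟩ | ⟨rfl, hv⟩)
    · exact hP.eq_of_not_lt_of_not_lt (fun h => hv' u h hu) (fun h => hu' u' h hv)
    · exact absurd hu (hv u)
    · exact absurd hv (hu u')
    · rfl
  choose F hF using hex
  obtain ⟨A, hA, hAR⟩ := exists_mem_sliceAt_iff hACA h𝔛 (R := R)
    (ψ := ((sliceMemF 0 (.var 1) (.var 2) 3).and
      (.all 3 (.imp (.lt (.var 3) (.var 2)) (.not (sliceMemF 0 (.var 1) (.var 3) 4))))).or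
      ((Fml.eq (.var 2) .zero).and (.all 3 (.not (sliceMemF 0 (.var 1) (.var 3) 4)))))
    (by simp [Fml.IsArith]) (w := fun _ => D) (fun _ => hD) (fun _ => S.zero)
    (fun q b u => by simp [R, PTerm.val])
  refine ⟨F, codedFun_of_sliceAt_iff hA fun b u => (hAR b u).trans
    ⟨fun h => huniq b u (F b) h (hF b), fun h => h ▸ hF b⟩, fun b ⟨u, hu⟩ => ?_⟩
  rcases hF b with ⟨h, -⟩ | ⟨-, h⟩
  · exact h
  · exact absurd hu (h u)

lemma exists_codedFun_fst_snd (hACA : SatACA0 S 𝔛) (h𝔛 : 𝔛.Nonempty) :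
    ∃ fst snd : M → M, S.CodedFun 𝔛 fst ∧ S.CodedFun 𝔛 snd ∧
      ∀ p a b, S.PairRel p a b → fst p = a ∧ snd p = b := by
  have hP := hACA.1
  obtain ⟨D₁, hD₁, hD₁p⟩ := exists_mem_sliceAt_iff hACA h𝔛
    (ψ := .ex 3 (pairF (.var 1) (.var 2) (.var 3))) (by simp) (fun _ => h𝔛.some_mem)
    (fun _ => S.zero) (R := fun p a => ∃ b, S.PairRel p a b) (fun q b u => by simp [PTerm.val])
  obtain ⟨D₂, hD₂, hD₂p⟩ := exists_mem_sliceAt_iff hACA h𝔛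
    (ψ := .ex 3 (pairF (.var 1) (.var 3) (.var 2))) (by simp) (fun _ => h𝔛.some_mem)
    (fun _ => S.zero) (R := fun p b => ∃ a, S.PairRel p a b) (fun q b u => by simp [PTerm.val])
  obtain ⟨fst, hfst, hfstD⟩ := exists_codedFun_mem_sliceAt hACA h𝔛 hD₁
  obtain ⟨snd, hsnd, hsndD⟩ := exists_codedFun_mem_sliceAt hACA h𝔛 hD₂
  refine ⟨fst, snd, hfst, hsnd, fun p a b hp => ⟨?_, ?_⟩⟩
  · obtain ⟨b', hb'⟩ := (hD₁p p _).1 (hfstD p ⟨a, (hD₁p p a).2 ⟨b, hp⟩⟩)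
    exact (hP.pairRel_inj hb' hp).1
  · obtain ⟨a', ha'⟩ := (hD₂p p _).1 (hsndD p ⟨b, (hD₂p p b).2 ⟨a, hp⟩⟩)
    exact (hP.pairRel_inj ha' hp).2

lemma sliceAt_setOf_fst_snd (hACA : SatACA0 S 𝔛) (h𝔛 : 𝔛.Nonempty) {fst snd : M → M}
    (hpair : ∀ p a b, S.PairRel p a b → fst p = a ∧ snd p = b) (R : M → M → Prop) (a : M) :
    S.SliceAt {p | R (fst p) (snd p)} a = {b | R a b} := by
  ext b
  constructor
  · rintro ⟨p, hp, hR⟩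
    simpa [(hpair p a b hp).1, (hpair p a b hp).2] using hR
  · intro hR
    obtain ⟨p, hp⟩ := exists_pairRel hACA h𝔛 a b
    exact ⟨p, hp, by simpa [(hpair p a b hp).1, (hpair p a b hp).2] using hR⟩

end CodedFunctions

section Diagram

open Fml

variable {M : Type} {S : AStr M} {𝔛 : Set (Set M)}

/-- `C` codes the elementary diagram of `K₀`, as produced by the arithmetized completeness
theorem. -/
def AStr.CodesDiagram (S K₀ : AStr M) (C : Set M) : Prop :=
  ∀ (φ : Fml) (l : ℕ) (v : ℕ → M), φ.IsFO → φ.freeN ⊆ Finset.range l →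
    (SatFO K₀ v φ ↔ ∃ s p, S.SeqLen s (S.num l) ∧ (∀ i < l, S.SeqAt s (S.num i) (v i)) ∧
      S.PairRel p (S.num (Fml.code φ)) s ∧ p ∈ C)

/-- The diagram condition for the formula with code `n`, evaluated at `(F₀ b, …, F_{l-1} b)`
where the graph of `Fᵢ` is the set parameter `i + 1`, the code set `C` is the set
parameter `0`, and `b` is the variable `0`. -/
def diagF (l n : ℕ) : Fml :=
  .ex 1 (.ex 2 ((seqLenF (.var 1) (numeral l) 4).and
    ((conj ((List.range l).map fun i => .ex 3 ((sliceMemF (i + 1) (.var 0) (.var 3) 4).and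
      (seqAtF (.var 1) (numeral i) (.var 3) 4)))).and
    ((pairF (.var 2) (numeral n) (.var 1)).and (.mem (.var 2) 0)))))

lemma isArith_diagF (l n : ℕ) : (diagF l n).IsArith := by
  simp only [diagF, isArith_ex, isArith_and, isArith_pairF]
  refine ⟨by simp [seqLenF], isArith_conj ?_, trivial, trivial⟩
  simp [seqAtF, betaF, modF, Fml.IsArith]

lemma sat_diagF {v : ℕ → M} {w : ℕ → Set M} (l n : ℕ) :
    Sat S 𝔛 v w (diagF l n) ↔ ∃ s p, S.SeqLen s (S.num l) ∧
      (∀ i < l, ∃ y ∈ S.SliceAt (w (i + 1)) (v 0), S.SeqAt s (S.num i) y) ∧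
      S.PairRel p (S.num n) s ∧ p ∈ w 0 := by
  have hlen : ∀ v' : ℕ → M, Sat S 𝔛 v' w (seqLenF (.var 1) (numeral l) 4) ↔
      S.SeqLen (v' 1) (S.num l) := fun v' =>
    (sat_seqLenF (by simp [PTerm.vars]) (by simp)).trans (by simp [PTerm.val])
  have hat : ∀ (v' : ℕ → M) (i : ℕ), Sat S 𝔛 v' w (seqAtF (.var 1) (numeral i) (.var 3) 4) ↔
      S.SeqAt (v' 1) (S.num i) (v' 3) := fun v' i =>
    (sat_seqAtF (by simp [PTerm.vars]) (by simp) (by simp [PTerm.vars])).trans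
      (by simp [PTerm.val])
  simp [diagF, sat_conj, hlen, hat, PTerm.val]

lemma setOf_satFO_mem (hACA : SatACA0 S 𝔛) {K₀ : AStr M} {C : Set M} (hC : C ∈ 𝔛)
    (hdiag : S.CodesDiagram K₀ C) {φ : Fml} (hφ : φ.IsFO) {F : ℕ → M → M}
    (hF : ∀ i, S.CodedFun 𝔛 (F i)) : {b | SatFO K₀ (fun i => F i b) φ} ∈ 𝔛 := by
  choose G hG hGF using hF
  refine setOf_mem_of_sat hACA (isArith_diagF (φ.freeN.sup id).succ (Fml.code φ))
    (w := fun k => if k = 0 then C else G (k - 1)) (fun k => by split <;> simp [*])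
    (fun _ => S.zero) (fun b => ?_)
  rw [sat_diagF, hdiag φ _ _ hφ (Finset.subset_range_sup_succ _)]
  simp [← hGF]

lemma exists_codedFun_satFO_update (hACA : SatACA0 S 𝔛) {K₀ : AStr M} {C : Set M}
    (hC : C ∈ 𝔛) (hdiag : S.CodesDiagram K₀ C) {φ : Fml} (hφ : φ.IsFO) {F : ℕ → M → M}
    (hF : ∀ i, S.CodedFun 𝔛 (F i)) (x : ℕ) :
    ∃ g : M → M, S.CodedFun 𝔛 g ∧ ∀ b, (∃ a, SatFO K₀ (Function.update (F · b) x a) φ) →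
      SatFO K₀ (Function.update (F · b) x (g b)) φ := by
  have h𝔛 : 𝔛.Nonempty := ⟨C, hC⟩
  obtain ⟨fst, snd, hfst, hsnd, hpair⟩ := exists_codedFun_fst_snd hACA h𝔛
  have hD := setOf_satFO_mem hACA hC hdiag hφ
    (F := fun i p => if i = x then snd p else F i (fst p))
    (fun i => by split; exacts [hsnd, (hF i).comp hACA h𝔛 hfst])
  have hDF : ∀ p, (fun i => if i = x then snd p else F i (fst p)) =
      Function.update (F · (fst p)) x (snd p) := fun p => by
    funext i; simp [Function.update_apply]
  simp only [hDF] at hD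
  obtain ⟨g, hg, hgD⟩ := exists_codedFun_mem_sliceAt hACA h𝔛 hD
  simp only [sliceAt_setOf_fst_snd hACA h𝔛 hpair
    (fun b u => SatFO K₀ (Function.update (F · b) x u) φ)] at hgD
  exact ⟨g, hg, hgD⟩

end Diagram

section Isomorphism

variable {KT M : Type}

structure AStr.IsIso (K : AStr KT) (K₀ : AStr M) (ϱ : KT → M) : Prop where
  bijective : Function.Bijective ϱ
  map_zero : ϱ K.zero = K₀.zero
  map_one : ϱ K.one = K₀.one
  map_add : ∀ a b, ϱ (K.add a b) = K₀.add (ϱ a) (ϱ b)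
  map_mul : ∀ a b, ϱ (K.mul a b) = K₀.mul (ϱ a) (ϱ b)
  lt_iff : ∀ a b, K.lt a b ↔ K₀.lt (ϱ a) (ϱ b)

variable {K : AStr KT} {K₀ : AStr M} {ϱ : KT → M}

lemma AStr.IsIso.map_val (hϱ : K.IsIso K₀ ϱ) (t : PTerm) (v : ℕ → KT) :
    ϱ (t.val K v) = t.val K₀ (fun i => ϱ (v i)) := by
  induction t with
  | var n => rfl
  | zero => exact hϱ.map_zero
  | one => exact hϱ.map_one
  | add t u iht ihu => simp only [PTerm.val, hϱ.map_add, iht, ihu]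
  | mul t u iht ihu => simp only [PTerm.val, hϱ.map_mul, iht, ihu]

lemma AStr.IsIso.sat_iff (hϱ : K.IsIso K₀ ϱ) {φ : Fml} (hφ : φ.IsFO) (v : ℕ → KT)
    {X : Set (Set KT)} {w : ℕ → Set KT} {X₀ : Set (Set M)} {w₀ : ℕ → Set M} :
    Sat K X v w φ ↔ Sat K₀ X₀ (fun i => ϱ (v i)) w₀ φ := by
  induction φ generalizing v with
  | eq t u => simp only [sat_eq, ← hϱ.map_val, hϱ.bijective.injective.eq_iff]
  | lt t u => simp only [sat_lt, ← hϱ.map_val, hϱ.lt_iff]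
  | mem t k => exact hφ.elim
  | not φ ih => simp only [sat_not, ih hφ]
  | imp φ ψ ihφ ihψ => simp only [sat_imp, ihφ hφ.1, ihψ hφ.2]
  | all x φ ih =>
    have hupd : ∀ a, (fun i => ϱ (Function.update v x a i)) =
        Function.update (fun i => ϱ (v i)) x (ϱ a) := fun a =>
      funext (Function.apply_update (fun _ => ϱ) v x a)
    simp only [sat_all, ih hφ, hupd]
    exact ⟨fun h b => by obtain ⟨a, rfl⟩ := hϱ.bijective.surjective b; exact h a,
      fun h a => h _⟩
  | allS k φ => exact hφ.elim

lemma AStr.IsIso.satFO_iff (hϱ : K.IsIso K₀ ϱ) {φ : Fml} (hφ : φ.IsFO) (v : ℕ → KT) :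
    SatFO K v φ ↔ SatFO K₀ (fun i => ϱ (v i)) φ :=
  hϱ.sat_iff hφ v

end Isomorphism

section TransportedDiagram

variable {M KT : Type} {S : AStr M} {𝔛 : Set (Set M)} {K : AStr KT} {K₀ : AStr M}
  {ϱ : KT → M} {C : Set M}
  (hACA : SatACA0 S 𝔛) (hC : C ∈ 𝔛) (hdiag : S.CodesDiagram K₀ C) (hϱ : K.IsIso K₀ ϱ)
include hACA hC hdiag hϱ

lemma setOf_satFO_mem_of_isIso {φ : Fml} (hφ : φ.IsFO) {F : ℕ → M → KT}
    (hF : ∀ i, S.CodedFun 𝔛 (fun a => ϱ (F i a))) : {b | SatFO K (fun i => F i b) φ} ∈ 𝔛 := by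
  simpa only [hϱ.satFO_iff hφ] using setOf_satFO_mem hACA hC hdiag hφ hF

lemma exists_satFO_update_of_isIso {φ : Fml} (hφ : φ.IsFO) {F : ℕ → M → KT}
    (hF : ∀ i, S.CodedFun 𝔛 (fun a => ϱ (F i a))) (x : ℕ) :
    ∃ g : M → KT, S.CodedFun 𝔛 (fun a => ϱ (g a)) ∧
      ∀ b, (∃ a, SatFO K (Function.update (F · b) x a) φ) →
        SatFO K (Function.update (F · b) x (g b)) φ := by
  have hupd : ∀ b a, (fun i => ϱ (Function.update (F · b) x a i)) =
      Function.update (fun i => ϱ (F i b)) x (ϱ a) := fun b a =>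
    funext (Function.apply_update (fun _ => ϱ) _ x a)
  obtain ⟨g, hg, hgφ⟩ := exists_codedFun_satFO_update hACA hC hdiag hφ hF x
  have hsurj := hϱ.bijective.surjective
  refine ⟨fun b => Function.surjInv hsurj (g b), by simpa [Function.surjInv_eq] using hg,
    fun b ⟨a, ha⟩ => ?_⟩
  rw [hϱ.satFO_iff hφ, hupd] at ha ⊢
  simpa [Function.surjInv_eq] using hgφ b ⟨_, ha⟩

lemma codedFun_val_of_isIso (t : PTerm) {F : ℕ → M → KT}
    (hF : ∀ i, S.CodedFun 𝔛 (fun a => ϱ (F i a))) :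
    S.CodedFun 𝔛 (fun b => ϱ (t.val K (fun i => F i b))) := by
  obtain ⟨x, hx⟩ := Infinite.exists_notMem_finset t.vars
  obtain ⟨g, hg, hgt⟩ := exists_satFO_update_of_isIso hACA hC hdiag hϱ
    (φ := .eq (.var x) t) trivial hF x
  have hsat : ∀ b a, SatFO K (Function.update (F · b) x a) (.eq (.var x) t) ↔
      a = t.val K (fun i => F i b) := fun b a => by
    simp [SatFO, PTerm.val, PTerm.val_update_of_notMem hx]
  have hgval : ∀ b, g b = t.val K (fun i => F i b) := fun b =>
    (hsat b _).1 (hgt b ⟨_, (hsat b _).2 rfl⟩)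
  simpa only [hgval] using hg

lemma exists_mem_sliceAt_eq_setOf_satFO {φ : Fml} (hφ : φ.IsFO) {f g : M → KT}
    (hf : S.CodedFun 𝔛 (fun a => ϱ (f a))) (hg : S.CodedFun 𝔛 (fun a => ϱ (g a))) :
    ∃ A ∈ 𝔛, ∀ a, S.SliceAt A a = {b | SatFO K (fun i => if i = 0 then f a else g b) φ} := by
  have h𝔛 : 𝔛.Nonempty := ⟨C, hC⟩
  obtain ⟨fst, snd, hfst, hsnd, hpair⟩ := exists_codedFun_fst_snd hACA h𝔛
  refine ⟨_, setOf_satFO_mem_of_isIso hACA hC hdiag hϱ hφ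
    (F := fun i p => if i = 0 then f (fst p) else g (snd p)) (fun i => ?_), fun a => ?_⟩
  · split
    exacts [hf.comp hACA h𝔛 hfst, hg.comp hACA h𝔛 hsnd]
  · exact sliceAt_setOf_fst_snd hACA h𝔛 hpair
      (fun a b => SatFO K (fun i => if i = 0 then f a else g b) φ) a

end TransportedDiagram

section Ultrapower

variable {M KT NT : Type} {S : AStr M} {𝔛 : Set (Set M)}

lemma IsFilterOn.mem_of_subset {U : Set (Set M)} (hU : IsFilterOn (S.PX 𝔛) U) {A B : Set M}
    (hA : A ∈ U) (hB : B ∈ 𝔛) (hAB : A ⊆ B) : B ∈ U := by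
  refine hU.2.2.2.1 A hA B ⟨hB, fun b => ?_⟩ hAB
  obtain ⟨a, ha, hba⟩ := (hU.1 hA).2 b
  exact ⟨a, hAB ha, hba⟩

lemma IsFilterOn.inter_mem_iff (hACA : SatACA0 S 𝔛) {U : Set (Set M)}
    (hU : IsFilterOn (S.PX 𝔛) U) {A B : Set M} (hA : A ∈ 𝔛) (hB : B ∈ 𝔛) :
    A ∩ B ∈ U ↔ A ∈ U ∧ B ∈ U := by
  refine ⟨fun h => ⟨hU.mem_of_subset h hA Set.inter_subset_left,
    hU.mem_of_subset h hB Set.inter_subset_right⟩, fun ⟨hA', hB'⟩ => ?_⟩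
  obtain ⟨D, hD, hDA, hDB⟩ := hU.2.2.2.2 A hA' B hB'
  exact hU.mem_of_subset hD (inter_mem hACA hA hB) (Set.subset_inter hDA hDB)

/-- `π` presents `N` as the restricted ultrapower `∏_𝔛 K / U`, where `∏_𝔛 K` consists of the
maps `f : M → K` with `ϱ ∘ f` coded in `𝔛`. -/
structure IsRestrictedUltrapower (S : AStr M) (𝔛 : Set (Set M)) (K : AStr KT) (ϱ : KT → M)
    (U : Set (Set M)) (SN : AStr NT) (π : (M → KT) → NT) : Prop where
  surj : ∀ n : NT, ∃ f : M → KT, S.CodedFun 𝔛 (fun a => ϱ (f a)) ∧ π f = n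
  eq_iff : ∀ f g : M → KT, S.CodedFun 𝔛 (fun a => ϱ (f a)) →
    S.CodedFun 𝔛 (fun a => ϱ (g a)) → (π f = π g ↔ {a : M | f a = g a} ∈ U)
  zero : ∀ f : M → KT, S.CodedFun 𝔛 (fun a => ϱ (f a)) → (∀ a, f a = K.zero) → π f = SN.zero
  one : ∀ f : M → KT, S.CodedFun 𝔛 (fun a => ϱ (f a)) → (∀ a, f a = K.one) → π f = SN.one
  add : ∀ f g h : M → KT, S.CodedFun 𝔛 (fun a => ϱ (f a)) →
    S.CodedFun 𝔛 (fun a => ϱ (g a)) → S.CodedFun 𝔛 (fun a => ϱ (h a)) →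
    (∀ a, h a = K.add (f a) (g a)) → SN.add (π f) (π g) = π h
  mul : ∀ f g h : M → KT, S.CodedFun 𝔛 (fun a => ϱ (f a)) →
    S.CodedFun 𝔛 (fun a => ϱ (g a)) → S.CodedFun 𝔛 (fun a => ϱ (h a)) →
    (∀ a, h a = K.mul (f a) (g a)) → SN.mul (π f) (π g) = π h
  lt_iff : ∀ f g : M → KT, S.CodedFun 𝔛 (fun a => ϱ (f a)) →
    S.CodedFun 𝔛 (fun a => ϱ (g a)) → (SN.lt (π f) (π g) ↔ {a : M | K.lt (f a) (g a)} ∈ U)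

inductive Fml.IsPosExistential : Fml → Prop
  | eq (t u : PTerm) : IsPosExistential (.eq t u)
  | lt (t u : PTerm) : IsPosExistential (.lt t u)
  | and {φ ψ : Fml} : IsPosExistential φ → IsPosExistential ψ → IsPosExistential (φ.and ψ)
  | ex (x : ℕ) {φ : Fml} : IsPosExistential φ → IsPosExistential (.ex x φ)

lemma Fml.IsPosExistential.isFO {φ : Fml} (hφ : φ.IsPosExistential) : φ.IsFO := by
  induction hφ with
  | eq | lt => trivial
  | and _ _ ihφ ihψ => exact ⟨ihφ, ihψ⟩
  | ex _ _ ih => exact ih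

lemma Fml.isPosExistential_memFml : memFml.IsPosExistential := by
  repeat constructor

variable {K : AStr KT} {K₀ : AStr M} {ϱ : KT → M} {C : Set M} {U : Set (Set M)}
  {SN : AStr NT} {π : (M → KT) → NT}
  (hACA : SatACA0 S 𝔛) (hC : C ∈ 𝔛) (hdiag : S.CodesDiagram K₀ C) (hϱ : K.IsIso K₀ ϱ)
  (hN : IsRestrictedUltrapower S 𝔛 K ϱ U SN π)
include hACA hC hdiag hϱ hN

lemma IsRestrictedUltrapower.val_eq (t : PTerm) {F : ℕ → M → KT}
    (hF : ∀ i, S.CodedFun 𝔛 (fun a => ϱ (F i a))) :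
    t.val SN (fun i => π (F i)) = π (fun b => t.val K (fun i => F i b)) := by
  have hval := fun t => codedFun_val_of_isIso hACA hC hdiag hϱ t hF
  induction t with
  | var n => rfl
  | zero => exact (hN.zero _ (hval .zero) fun _ => rfl).symm
  | one => exact (hN.one _ (hval .one) fun _ => rfl).symm
  | add t u iht ihu =>
    rw [PTerm.val, iht, ihu]
    exact hN.add _ _ _ (hval t) (hval u) (hval (t.add u)) fun _ => rfl
  | mul t u iht ihu =>
    rw [PTerm.val, iht, ihu]
    exact hN.mul _ _ _ (hval t) (hval u) (hval (t.mul u)) fun _ => rfl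

lemma IsRestrictedUltrapower.satFO_ex_iff (hU : IsFilterOn (S.PX 𝔛) U) {φ : Fml}
    (hφ : φ.IsFO) (x : ℕ)
    (ih : ∀ {F : ℕ → M → KT}, (∀ i, S.CodedFun 𝔛 (fun a => ϱ (F i a))) →
      (SatFO SN (fun i => π (F i)) φ ↔ {b | SatFO K (fun i => F i b) φ} ∈ U))
    {F : ℕ → M → KT} (hF : ∀ i, S.CodedFun 𝔛 (fun a => ϱ (F i a))) :
    SatFO SN (fun i => π (F i)) (.ex x φ) ↔ {b | SatFO K (fun i => F i b) (.ex x φ)} ∈ U := by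
  have hupdF : ∀ g : M → KT, S.CodedFun 𝔛 (fun a => ϱ (g a)) →
      ∀ i, S.CodedFun 𝔛 (fun a => ϱ (Function.update F x g i a)) := fun g hg i => by
    rcases eq_or_ne i x with rfl | hi
    · simpa using hg
    · simpa [hi] using hF i
  have hπ : ∀ g : M → KT, (fun i => π (Function.update F x g i)) =
      Function.update (fun i => π (F i)) x (π g) := fun g =>
    funext (Function.apply_update (fun _ => π) F x g)
  have hpt : ∀ (g : M → KT) b, (fun i => Function.update F x g i b) =
      Function.update (F · b) x (g b) := fun g b =>
    funext (Function.apply_update (fun _ h => h b) F x g)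
  have hexU := setOf_satFO_mem_of_isIso hACA hC hdiag hϱ (φ := .ex x φ) hφ hF
  simp only [satFO_ex] at hexU ⊢
  constructor
  · rintro ⟨n, hn⟩
    obtain ⟨g, hg, rfl⟩ := hN.surj n
    rw [← hπ, ih (hupdF g hg)] at hn
    exact hU.mem_of_subset hn hexU fun b hb =>
      ⟨g b, by simpa only [hpt, Set.mem_ofPred_eq] using hb⟩
  · intro h
    obtain ⟨g, hg, hgφ⟩ := exists_satFO_update_of_isIso hACA hC hdiag hϱ hφ hF x
    refine ⟨π g, ?_⟩
    rw [← hπ, ih (hupdF g hg)]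
    exact hU.mem_of_subset h (setOf_satFO_mem_of_isIso hACA hC hdiag hϱ hφ (hupdF g hg))
      fun b hb => by simpa only [hpt, Set.mem_ofPred_eq] using hgφ b hb

/-- Łoś's theorem, for positive existential formulas. -/
theorem IsRestrictedUltrapower.satFO_iff (hU : IsFilterOn (S.PX 𝔛) U) {φ : Fml}
    (hφ : φ.IsPosExistential) {F : ℕ → M → KT} (hF : ∀ i, S.CodedFun 𝔛 (fun a => ϱ (F i a))) :
    SatFO SN (fun i => π (F i)) φ ↔ {b | SatFO K (fun i => F i b) φ} ∈ U := by
  induction hφ generalizing F with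
  | eq t u =>
    rw [satFO_eq, hN.val_eq hACA hC hdiag hϱ _ hF, hN.val_eq hACA hC hdiag hϱ _ hF]
    exact hN.eq_iff _ _ (codedFun_val_of_isIso hACA hC hdiag hϱ t hF)
      (codedFun_val_of_isIso hACA hC hdiag hϱ u hF)
  | lt t u =>
    rw [satFO_lt, hN.val_eq hACA hC hdiag hϱ _ hF, hN.val_eq hACA hC hdiag hϱ _ hF]
    exact hN.lt_iff _ _ (codedFun_val_of_isIso hACA hC hdiag hϱ t hF)
      (codedFun_val_of_isIso hACA hC hdiag hϱ u hF)
  | @and φ ψ hφ hψ ihφ ihψ =>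
    have hset := fun {χ : Fml} (hχ : χ.IsFO) => setOf_satFO_mem_of_isIso hACA hC hdiag hϱ hχ hF
    simp only [satFO_and]
    rw [ihφ hF, ihψ hF, ← hU.inter_mem_iff hACA (hset hφ.isFO) (hset hψ.isFO)]
    rfl
  | ex x hφ ih => exact hN.satFO_ex_iff hACA hC hdiag hϱ hU hφ.isFO x ih hF

lemma IsRestrictedUltrapower.memRel_iff (hU : IsFilterOn (S.PX 𝔛) U) {f g : M → KT}
    (hf : S.CodedFun 𝔛 (fun a => ϱ (f a))) (hg : S.CodedFun 𝔛 (fun a => ϱ (g a))) :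
    SN.MemRel (π f) (π g) ↔ {b | K.MemRel (f b) (g b)} ∈ U := by
  have h := hN.satFO_iff hACA hC hdiag hϱ hU Fml.isPosExistential_memFml
    (F := fun i => if i = 0 then f else g) (fun i => by split <;> assumption)
  simpa only [satFO_memFml, if_pos, one_ne_zero, if_false] using h

end Ultrapower

theorem restricted_ultrapower_coded_in_X_general
    {M KT NT : Type} (S : AStr M) (𝔛 : Set (Set M))
    (K : AStr KT) (j : M → KT) (K0 : AStr M) (C : Set M) (ϱ : KT → M)
    (U : Set (Set M)) (SN : AStr NT) (π : (M → KT) → NT)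
    -- the second-order structure (M,𝔛) ⊨ ACA₀
    (hACA : SatACA0 S 𝔛)
    -- K₀ ⊨ T has domain M and its elementary diagram is coded by C ∈ 𝔛
    (hC : C ∈ 𝔛)
    (hdiag : ∀ (φ : Fml) (l : ℕ) (v : ℕ → M), Fml.IsFO φ → φ.freeN ⊆ Finset.range l →
      (SatFO K0 v φ ↔ ∃ s p, S.SeqLen s (S.num l) ∧ (∀ i < l, S.SeqAt s (S.num i) (v i)) ∧
        S.PairRel p (S.num (Fml.code φ)) s ∧ p ∈ C))
    -- ϱ : K ≅ K₀ is an isomorphism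
    (hrbij : Function.Bijective ϱ)
    (hr0 : ϱ K.zero = K0.zero) (hr1 : ϱ K.one = K0.one)
    (hradd : ∀ a b, ϱ (K.add a b) = K0.add (ϱ a) (ϱ b))
    (hrmul : ∀ a b, ϱ (K.mul a b) = K0.mul (ϱ a) (ϱ b))
    (hrlt : ∀ a b, K.lt a b ↔ K0.lt (ϱ a) (ϱ b))
    -- ϱ ∘ j is the canonical embedding of M into K₀, and it is coded in 𝔛
    (hcancod : S.CodedFun 𝔛 (fun a => ϱ (j a)))
    -- U is an ultrafilter on P_𝔛
    (hU : IsUltraOn (S.PX 𝔛) U)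
    -- (NT, SN, π) realizes the restricted ultrapower N = ∏_𝔛 K / U :
    -- π maps ∏_𝔛 K (the functions f with ϱ ∘ f coded in 𝔛) onto N,
    -- identifying f and g exactly when they agree on a set in U
    (hsurj : ∀ n : NT, ∃ f : M → KT, S.CodedFun 𝔛 (fun a => ϱ (f a)) ∧ π f = n)
    (heq : ∀ f g : M → KT, S.CodedFun 𝔛 (fun a => ϱ (f a)) →
      S.CodedFun 𝔛 (fun a => ϱ (g a)) → (π f = π g ↔ {a : M | f a = g a} ∈ U))
    (hzero : ∀ f : M → KT, S.CodedFun 𝔛 (fun a => ϱ (f a)) → (∀ a, f a = K.zero) →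
      π f = SN.zero)
    (hone : ∀ f : M → KT, S.CodedFun 𝔛 (fun a => ϱ (f a)) → (∀ a, f a = K.one) →
      π f = SN.one)
    (hadd : ∀ f g h : M → KT, S.CodedFun 𝔛 (fun a => ϱ (f a)) →
      S.CodedFun 𝔛 (fun a => ϱ (g a)) → S.CodedFun 𝔛 (fun a => ϱ (h a)) →
      (∀ a, h a = K.add (f a) (g a)) → SN.add (π f) (π g) = π h)
    (hmul : ∀ f g h : M → KT, S.CodedFun 𝔛 (fun a => ϱ (f a)) →
      S.CodedFun 𝔛 (fun a => ϱ (g a)) → S.CodedFun 𝔛 (fun a => ϱ (h a)) →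
      (∀ a, h a = K.mul (f a) (g a)) → SN.mul (π f) (π g) = π h)
    (hlt : ∀ f g : M → KT, S.CodedFun 𝔛 (fun a => ϱ (f a)) →
      S.CodedFun 𝔛 (fun a => ϱ (g a)) →
      (SN.lt (π f) (π g) ↔ {a : M | K.lt (f a) (g a)} ∈ U))
    -- U is complete and definable
    (hdef : S.DefinableFam 𝔛 U) :
    ∀ c : NT, {a : M | SN.MemRel (π (fun _ => j a)) c} ∈ 𝔛 := by
  have hϱ : K.IsIso K0 ϱ := ⟨hrbij, hr0, hr1, hradd, hrmul, hrlt⟩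
  have hN : IsRestrictedUltrapower S 𝔛 K ϱ U SN π := ⟨hsurj, heq, hzero, hone, hadd, hmul, hlt⟩
  intro c
  obtain ⟨f, hf, rfl⟩ := hsurj c
  obtain ⟨B, hB, hBslice⟩ := exists_mem_sliceAt_eq_setOf_satFO hACA hC hdiag hϱ
    Fml.isPosExistential_memFml.isFO hcancod hf
  have hloś : ∀ a, SN.MemRel (π (fun _ => j a)) (π f) ↔ S.SliceAt B a ∈ U := fun a => by
    rw [hN.memRel_iff hACA hC hdiag hϱ hU.1 (codedFun_const hACA ⟨C, hC⟩ _) hf, hBslice]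
    simp [satFO_memFml]
  simpa only [hloś] using hdef B hB

/-- Lemma: `Cod(N/M) ⊆ 𝔛`. If `U` is a complete and definable
ultrafilter on `P_𝔛` then every subset of `M` coded in `N = ∏_𝔛 K / U` lies in `𝔛`. -/
theorem restricted_ultrapower_coded_in_X
    {M KT NT : Type} (S : AStr M) (𝔛 : Set (Set M)) (T : Set Fml) (A : Set M)
    (K : AStr KT) (j : M → KT) (K0 : AStr M) (C : Set M) (ϱ : KT → M)
    (U : Set (Set M)) (SN : AStr NT) (π : (M → KT) → NT)
    -- the second-order structure (M,𝔛) ⊨ ACA₀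
    (hACA : SatACA0 S 𝔛)
    -- T ⊇ PA is a theory coded in 𝔛 with M ⊨ Con_T
    (hSent : ∀ φ ∈ T, IsFOSentence φ) (hPA : PAax ⊆ T)
    (hA : A ∈ 𝔛) (hTcode : ∀ n : ℕ, (S.num n ∈ A ↔ n ∈ theoryCode T))
    (hCon : S.SatConTheory T)
    -- M ⊆_e K : j embeds M onto an initial segment of K
    (hjinj : Function.Injective j)
    (hj0 : j S.zero = K.zero) (hj1 : j S.one = K.one)
    (hjadd : ∀ a b, j (S.add a b) = K.add (j a) (j b))
    (hjmul : ∀ a b, j (S.mul a b) = K.mul (j a) (j b))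
    (hjlt : ∀ a b, S.lt a b ↔ K.lt (j a) (j b))
    (hjinit : ∀ (x : KT) (a : M), K.lt x (j a) → ∃ b : M, j b = x)
    -- K₀ ⊨ T has domain M and its elementary diagram is coded by C ∈ 𝔛
    (hK0T : ModelsT K0 T) (hC : C ∈ 𝔛)
    (hdiag : ∀ (φ : Fml) (l : ℕ) (v : ℕ → M), Fml.IsFO φ → φ.freeN ⊆ Finset.range l →
      (SatFO K0 v φ ↔ ∃ s p, S.SeqLen s (S.num l) ∧ (∀ i < l, S.SeqAt s (S.num i) (v i)) ∧
        S.PairRel p (S.num (Fml.code φ)) s ∧ p ∈ C))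
    -- ϱ : K ≅ K₀ is an isomorphism
    (hrbij : Function.Bijective ϱ)
    (hr0 : ϱ K.zero = K0.zero) (hr1 : ϱ K.one = K0.one)
    (hradd : ∀ a b, ϱ (K.add a b) = K0.add (ϱ a) (ϱ b))
    (hrmul : ∀ a b, ϱ (K.mul a b) = K0.mul (ϱ a) (ϱ b))
    (hrlt : ∀ a b, K.lt a b ↔ K0.lt (ϱ a) (ϱ b))
    -- ϱ ∘ j is the canonical embedding of M into K₀, and it is coded in 𝔛
    (hcan0 : ϱ (j S.zero) = K0.zero)
    (hcansucc : ∀ a, ϱ (j (S.add a S.one)) = K0.add (ϱ (j a)) K0.one)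
    (hcancod : S.CodedFun 𝔛 (fun a => ϱ (j a)))
    -- U is an ultrafilter on P_𝔛
    (hU : IsUltraOn (S.PX 𝔛) U)
    -- (NT, SN, π) realizes the restricted ultrapower N = ∏_𝔛 K / U :
    -- π maps ∏_𝔛 K (the functions f with ϱ ∘ f coded in 𝔛) onto N,
    -- identifying f and g exactly when they agree on a set in U
    (hsurj : ∀ n : NT, ∃ f : M → KT, S.CodedFun 𝔛 (fun a => ϱ (f a)) ∧ π f = n)
    (heq : ∀ f g : M → KT, S.CodedFun 𝔛 (fun a => ϱ (f a)) →
      S.CodedFun 𝔛 (fun a => ϱ (g a)) → (π f = π g ↔ {a : M | f a = g a} ∈ U))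
    (hzero : ∀ f : M → KT, S.CodedFun 𝔛 (fun a => ϱ (f a)) → (∀ a, f a = K.zero) →
      π f = SN.zero)
    (hone : ∀ f : M → KT, S.CodedFun 𝔛 (fun a => ϱ (f a)) → (∀ a, f a = K.one) →
      π f = SN.one)
    (hadd : ∀ f g h : M → KT, S.CodedFun 𝔛 (fun a => ϱ (f a)) →
      S.CodedFun 𝔛 (fun a => ϱ (g a)) → S.CodedFun 𝔛 (fun a => ϱ (h a)) →
      (∀ a, h a = K.add (f a) (g a)) → SN.add (π f) (π g) = π h)
    (hmul : ∀ f g h : M → KT, S.CodedFun 𝔛 (fun a => ϱ (f a)) →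
      S.CodedFun 𝔛 (fun a => ϱ (g a)) → S.CodedFun 𝔛 (fun a => ϱ (h a)) →
      (∀ a, h a = K.mul (f a) (g a)) → SN.mul (π f) (π g) = π h)
    (hlt : ∀ f g : M → KT, S.CodedFun 𝔛 (fun a => ϱ (f a)) →
      S.CodedFun 𝔛 (fun a => ϱ (g a)) →
      (SN.lt (π f) (π g) ↔ {a : M | K.lt (f a) (g a)} ∈ U))
    -- U is complete and definable
    (hcompl : S.CompleteOn 𝔛 U)
    (hdef : S.DefinableFam 𝔛 U) :
    ∀ c : NT, {a : M | SN.MemRel (π (fun _ => j a)) c} ∈ 𝔛 :=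
  restricted_ultrapower_coded_in_X_general S 𝔛 K j K0 C ϱ U SN π hACA hC hdiag hrbij hr0 hr1 hradd
    hrmul hrlt hcancod hU hsurj heq hzero hone hadd hmul hlt hdef

end Paper
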